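/- arXiv:1903.00189 — 7 statements merged into one kernel-verified Lean document; each statement's English description precedes it below -/
import Mathlib

section
/- The representing measure in the integral representation of a function of class T_n is unique: if μ₁ and μ₂ are positive (Radon) measures on ℝ₊ⁿ∖{0}, each satisfying the condition that for sufficiently small δ > 0 the functions u ↦ u_j are integrable on [0,δ)ⁿ∖{0} for each j and the measure of ℝ₊ⁿ∖[0,δ)ⁿ is finite, and if c₀ + c₁·s + ∫_{ℝ₊ⁿ∖{0}} (e^{s·u} − 1) dμ₁(u) = c₀ + c₁·s + ∫_{ℝ₊ⁿ∖{0}} (e^{s·u} − 1) dμ₂(u) for all s ∈ (−∞,0)ⁿ, then μ₁ = μ₂. -/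
open MeasureTheory Filter Set

noncomputable section

/-- The open negative orthant `(-∞,0)^n`. -/
def negOrthant (n : ℕ) : Set (Fin n → ℝ) := {s | ∀ i, s i < 0}

/-- `f` is absolutely monotone on `(-∞,0)^n`: it is `C^∞` there and all its
iterated partial derivatives (of all orders, including order `0`) are nonnegative. -/
def AbsMono (n : ℕ) (f : (Fin n → ℝ) → ℝ) : Prop :=
  ContDiffOn ℝ (⊤ : ℕ∞) f (negOrthant n) ∧
  ∀ (k : ℕ) (m : Fin k → Fin n), ∀ x ∈ negOrthant n,
    0 ≤ iteratedFDerivWithin ℝ k f (negOrthant n) x (fun i => Pi.single (m i) 1)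

/-- `ψ` belongs to the class `T_n`: it is a nonpositive `C^∞` function on `(-∞,0)^n`
all of whose partial derivatives of every order `≥ 1` are nonnegative. -/
def MemT (n : ℕ) (ψ : (Fin n → ℝ) → ℝ) : Prop :=
  ContDiffOn ℝ (⊤ : ℕ∞) ψ (negOrthant n) ∧
  (∀ x ∈ negOrthant n, ψ x ≤ 0) ∧
  ∀ (k : ℕ) (m : Fin (k + 1) → Fin n), ∀ x ∈ negOrthant n,
    0 ≤ iteratedFDerivWithin ℝ (k + 1) ψ (negOrthant n) x (fun i => Pi.single (m i) 1)

/-- `ℝ₊ⁿ ∖ {0}`. -/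
def posPart (n : ℕ) : Set (Fin n → ℝ) := {u | (∀ i, 0 ≤ u i) ∧ u ≠ 0}

/-- `[0,δ)ⁿ ∖ {0}`. -/
def smallBox (n : ℕ) (δ : ℝ) : Set (Fin n → ℝ) := {u | (∀ i, 0 ≤ u i ∧ u i < δ) ∧ u ≠ 0}

/-- `ℝ₊ⁿ ∖ [0,δ)ⁿ`. -/
def farPart (n : ℕ) (δ : ℝ) : Set (Fin n → ℝ) := {u | (∀ i, 0 ≤ u i) ∧ ¬ ∀ i, u i < δ}

/-- The conditions on the representing measure: for sufficiently small `δ > 0`,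
the coordinate functions are integrable on `[0,δ)ⁿ ∖ {0}` and
`μ(ℝ₊ⁿ ∖ [0,δ)ⁿ) < ∞`. -/
def GoodMeasure (n : ℕ) (μ : Measure (Fin n → ℝ)) : Prop :=
  ∃ δ > (0:ℝ), (∀ j, IntegrableOn (fun u => u j) (smallBox n δ) μ) ∧ μ (farPart n δ) < ⊤

open scoped ENNReal NNReal Topology

/-! ### Auxiliary material for the uniqueness proof -/

lemma repu_contE {n : ℕ} (s : Fin n → ℝ) :
    Continuous fun u : Fin n → ℝ => Real.exp (∑ i, s i * u i) :=
  Real.continuous_exp.comp (continuous_finset_sum _ fun i _ =>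
    (continuous_const.mul (continuous_apply i)))

lemma repu_measP (n : ℕ) : MeasurableSet (posPart n) := by
  have : posPart n = (⋂ i, {u : Fin n → ℝ | 0 ≤ u i}) ∩ {(0 : Fin n → ℝ)}ᶜ := by
    ext u
    simp only [Set.mem_inter_iff, Set.mem_iInter, Set.mem_compl_iff, Set.mem_singleton_iff,
      Set.mem_setOf_eq]
    exact Iff.rfl
  rw [this]
  exact (MeasurableSet.iInter fun i =>
    measurableSet_le measurable_const (measurable_pi_apply i)).inter
    (MeasurableSet.singleton 0).compl

/-- The compact cube `[0,1]^n` as a type. -/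
abbrev RepuCube (n : ℕ) := Fin n → ↥(Set.Icc (0:ℝ) 1)

lemma repu_cont_integral_eq {n : ℕ} (ρ₁ ρ₂ : Measure (RepuCube n)) [IsFiniteMeasure ρ₁]
    [IsFiniteMeasure ρ₂]
    (hmono : ∀ k : Fin n → ℕ,
      ∫ x, (∏ i, ((x i : ℝ)) ^ (k i)) ∂ρ₁ = ∫ x, (∏ i, ((x i : ℝ)) ^ (k i)) ∂ρ₂)
    (g : C(RepuCube n, ℝ)) : ∫ x, g x ∂ρ₁ = ∫ x, g x ∂ρ₂ := by
  classical
  let π : Fin n → C(RepuCube n, ℝ) := fun i =>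
    ⟨fun x => (x i : ℝ), continuous_subtype_val.comp (continuous_apply i)⟩
  let A : Subalgebra ℝ C(RepuCube n, ℝ) := Algebra.adjoin ℝ (Set.range π)
  have hsep : A.SeparatesPoints := by
    intro x y hxy
    obtain ⟨i, hi⟩ := Function.ne_iff.mp hxy
    refine ⟨π i, ⟨π i, Algebra.subset_adjoin ⟨i, rfl⟩, rfl⟩, ?_⟩
    simpa [π] using fun hc => hi (Subtype.ext hc)
  have hintg : ∀ (g : C(RepuCube n, ℝ)) (ρ : Measure (RepuCube n)) [IsFiniteMeasure ρ],
      Integrable g ρ :=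
    fun g ρ _ => (BoundedContinuousFunction.mkOfCompact g).integrable ρ
  have hAeq : ∀ f ∈ A, ∫ x, f x ∂ρ₁ = ∫ x, f x ∂ρ₂ := by
    have shape : ∀ f ∈ Submonoid.closure (Set.range π),
        ∃ k : Fin n → ℕ, ∀ x : RepuCube n, f x = ∏ i, ((x i : ℝ)) ^ (k i) := by
      intro f hf
      induction hf using Submonoid.closure_induction with
      | mem f hf =>
        obtain ⟨i, rfl⟩ := hf
        refine ⟨Pi.single i 1, fun x => ?_⟩
        rw [Finset.prod_eq_single i (fun j _ hj => by simp [Pi.single_eq_of_ne hj])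
          (by simp)]
        simp [π]
      | one => exact ⟨0, fun x => by simp⟩
      | mul f g hf hg ihf ihg =>
        obtain ⟨k₁, hk₁⟩ := ihf
        obtain ⟨k₂, hk₂⟩ := ihg
        refine ⟨k₁ + k₂, fun x => ?_⟩
        simp only [ContinuousMap.mul_apply, hk₁, hk₂, Pi.add_apply, pow_add,
          ← Finset.prod_mul_distrib]
    let M : Submodule ℝ C(RepuCube n, ℝ) :=
      { carrier := {f | ∫ x, f x ∂ρ₁ = ∫ x, f x ∂ρ₂}
        add_mem' := by
          intro f g hf hg
          simp only [Set.mem_setOf_eq, ContinuousMap.add_apply] at *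
          rw [integral_add (hintg f ρ₁) (hintg g ρ₁), integral_add (hintg f ρ₂) (hintg g ρ₂),
            hf, hg]
        zero_mem' := by simp
        smul_mem' := by
          intro c f hf
          simp only [Set.mem_setOf_eq, ContinuousMap.smul_apply] at *
          rw [integral_smul, integral_smul, hf] }
    intro f hf
    have hf' : f ∈ Submodule.span ℝ (Submonoid.closure (Set.range π) : Set C(RepuCube n, ℝ)) := by
      rw [← Algebra.adjoin_eq_span]
      exact hf
    have hle : Submodule.span ℝ (Submonoid.closure (Set.range π) : Set C(RepuCube n, ℝ)) ≤ M := by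
      refine Submodule.span_le.mpr ?_
      intro f hf
      obtain ⟨k, hk⟩ := shape f hf
      show ∫ x, f x ∂ρ₁ = ∫ x, f x ∂ρ₂
      simp only [hk]
      exact hmono k
    exact hle hf'
  have key : ∀ ε > (0:ℝ), |∫ x, g x ∂ρ₁ - ∫ x, g x ∂ρ₂| ≤ ε := by
    intro ε hε
    set m₁ := (ρ₁ Set.univ).toReal with hm₁
    set m₂ := (ρ₂ Set.univ).toReal with hm₂
    have hm₁0 : 0 ≤ m₁ := ENNReal.toReal_nonneg
    have hm₂0 : 0 ≤ m₂ := ENNReal.toReal_nonneg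
    set δ := ε / (m₁ + m₂ + 1) with hδ
    have hδpos : 0 < δ := div_pos hε (by linarith)
    obtain ⟨g', hg'⟩ := ContinuousMap.exists_mem_subalgebra_near_continuous_of_separatesPoints
      A hsep g g.continuous δ hδpos
    have hsub₁ : ‖∫ x, ((g' : C(RepuCube n, ℝ)) x - g x) ∂ρ₁‖ ≤ δ * m₁ :=
      norm_integral_le_of_norm_le_const (ae_of_all _ fun x => (hg' x).le)
    have hsub₂ : ‖∫ x, ((g' : C(RepuCube n, ℝ)) x - g x) ∂ρ₂‖ ≤ δ * m₂ :=
      norm_integral_le_of_norm_le_const (ae_of_all _ fun x => (hg' x).le)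
    have hgint := hAeq (g' : C(RepuCube n, ℝ)) g'.2
    rw [integral_sub (hintg _ ρ₁) (hintg g ρ₁)] at hsub₁
    rw [integral_sub (hintg _ ρ₂) (hintg g ρ₂)] at hsub₂
    rw [Real.norm_eq_abs, abs_le] at hsub₁ hsub₂
    have hδle : δ * (m₁ + m₂) ≤ ε := by
      rw [hδ, div_mul_eq_mul_div, div_le_iff₀ (by linarith : (0:ℝ) < m₁ + m₂ + 1)]
      nlinarith
    rw [abs_le]
    constructor <;> nlinarith [hsub₁.1, hsub₁.2, hsub₂.1, hsub₂.2]
  by_contra hne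
  have h0 : 0 < |∫ x, g x ∂ρ₁ - ∫ x, g x ∂ρ₂| := abs_pos.mpr (sub_ne_zero.mpr hne)
  linarith [key _ (half_pos h0)]

/-- Uniqueness of the Laplace transform for finite measures on the nonnegative orthant. -/
lemma repu_laplace_unique (n : ℕ) (ν₁ ν₂ : Measure (Fin n → ℝ))
    [IsFiniteMeasure ν₁] [IsFiniteMeasure ν₂]
    (hQ₁ : ∀ᵐ u ∂ν₁, ∀ i, 0 ≤ u i) (hQ₂ : ∀ᵐ u ∂ν₂, ∀ i, 0 ≤ u i)
    (h : ∀ s : Fin n → ℝ, (∀ i, s i ≤ 0) →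
      ∫ u, Real.exp (∑ i, s i * u i) ∂ν₁ = ∫ u, Real.exp (∑ i, s i * u i) ∂ν₂) :
    ν₁ = ν₂ := by
  classical
  let Φ : (Fin n → ℝ) → RepuCube n := fun u i => Set.projIcc 0 1 zero_le_one (Real.exp (-(u i)))
  have hΦcont : Continuous Φ :=
    continuous_pi fun i => continuous_projIcc.comp
      (Real.continuous_exp.comp (continuous_apply i).neg)
  let Ψ : RepuCube n → (Fin n → ℝ) := fun x i => - Real.log (x i)
  have hΨmeas : Measurable Ψ := measurable_pi_lambda _ fun i =>
    ((Real.measurable_log.comp (measurable_subtype_coe.comp (measurable_pi_apply i))).neg)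
  have push : ∀ (ν : Measure (Fin n → ℝ)), (∀ᵐ u ∂ν, ∀ i, 0 ≤ u i) → ∀ k : Fin n → ℕ,
      ∫ x, (∏ i, ((x i : ℝ)) ^ (k i)) ∂(ν.map Φ)
        = ∫ u, Real.exp (∑ i, (-(k i : ℝ)) * u i) ∂ν := by
    intro ν hQ k
    have hcont : Continuous fun x : RepuCube n => ∏ i, ((x i : ℝ)) ^ (k i) :=
      continuous_finset_prod _ fun i _ =>
        ((continuous_subtype_val.comp (continuous_apply i)).pow _)
    rw [integral_map hΦcont.aemeasurable hcont.aestronglyMeasurable]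
    refine integral_congr_ae (hQ.mono fun u hu => ?_)
    have hval : ∀ i, ((Φ u i : ℝ)) = Real.exp (-(u i)) := by
      intro i
      have hmem : Real.exp (-(u i)) ∈ Set.Icc (0:ℝ) 1 :=
        ⟨(Real.exp_pos _).le, Real.exp_le_one_iff.mpr (neg_nonpos.mpr (hu i))⟩
      simp only [Φ, Set.projIcc_of_mem zero_le_one hmem]
    have hpow : ∀ i, Real.exp (-(u i)) ^ (k i) = Real.exp ((-(k i : ℝ)) * u i) := by
      intro i
      rw [← Real.exp_nat_mul]
      congr 1
      ring
    simp only [Function.comp, hval, hpow, ← Real.exp_sum]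
  haveI : IsFiniteMeasure (ν₁.map Φ) := Measure.isFiniteMeasure_map ν₁ Φ
  haveI : IsFiniteMeasure (ν₂.map Φ) := Measure.isFiniteMeasure_map ν₂ Φ
  have hmono : ∀ k : Fin n → ℕ,
      ∫ x, (∏ i, ((x i : ℝ)) ^ (k i)) ∂(ν₁.map Φ)
        = ∫ x, (∏ i, ((x i : ℝ)) ^ (k i)) ∂(ν₂.map Φ) := by
    intro k
    rw [push ν₁ hQ₁ k, push ν₂ hQ₂ k]
    exact h _ fun i => neg_nonpos.mpr (Nat.cast_nonneg _)
  have hρ : ν₁.map Φ = ν₂.map Φ := by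
    apply ext_of_forall_lintegral_eq_of_IsFiniteMeasure
    intro f
    have h₁ := BoundedContinuousFunction.lintegral_lt_top_of_nnreal (ν₁.map Φ) f
    have h₂ := BoundedContinuousFunction.lintegral_lt_top_of_nnreal (ν₂.map Φ) f
    rw [← ENNReal.toReal_eq_toReal_iff' h₁.ne h₂.ne,
      BoundedContinuousFunction.toReal_lintegral_coe_eq_integral,
      BoundedContinuousFunction.toReal_lintegral_coe_eq_integral]
    exact repu_cont_integral_eq _ _ hmono
      ⟨fun x => (f x : ℝ), NNReal.continuous_coe.comp f.continuous⟩
  have hid : ∀ (ν : Measure (Fin n → ℝ)), (∀ᵐ u ∂ν, ∀ i, 0 ≤ u i) →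
      (ν.map Φ).map Ψ = ν := by
    intro ν hQ
    rw [Measure.map_map hΨmeas hΦcont.measurable]
    have hae : Ψ ∘ Φ =ᵐ[ν] id := by
      refine hQ.mono fun u hu => ?_
      funext i
      have hmem : Real.exp (-(u i)) ∈ Set.Icc (0:ℝ) 1 :=
        ⟨(Real.exp_pos _).le, Real.exp_le_one_iff.mpr (neg_nonpos.mpr (hu i))⟩
      simp only [Function.comp_apply, Ψ, Φ, Set.projIcc_of_mem zero_le_one hmem,
        Real.log_exp, neg_neg, id]
    rw [Measure.map_congr hae, Measure.map_id]
  calc ν₁ = (ν₁.map Φ).map Ψ := (hid ν₁ hQ₁).symm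
    _ = (ν₂.map Φ).map Ψ := by rw [hρ]
    _ = ν₂ := hid ν₂ hQ₂

lemma repu_finite {n : ℕ} {μ : Measure (Fin n → ℝ)} {s₀ : Fin n → ℝ}
    (hint : IntegrableOn (fun u => Real.exp (∑ i, s₀ i * u i) - 1) (posPart n) μ) :
    IsFiniteMeasure ((μ.restrict (posPart n)).withDensity
      fun u => (((1 - Real.exp (∑ i, s₀ i * u i)).toNNReal : ℝ≥0) : ℝ≥0∞)) := by
  constructor
  rw [withDensity_apply _ MeasurableSet.univ, Measure.restrict_univ]
  calc ∫⁻ u, (((1 - Real.exp (∑ i, s₀ i * u i)).toNNReal : ℝ≥0) : ℝ≥0∞)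
        ∂(μ.restrict (posPart n))
      ≤ ∫⁻ u, (‖Real.exp (∑ i, s₀ i * u i) - 1‖₊ : ℝ≥0∞) ∂(μ.restrict (posPart n)) := by
        refine lintegral_mono fun u => ?_
        rw [← enorm_eq_nnnorm, ← ofReal_norm]
        show ENNReal.ofReal _ ≤ ENNReal.ofReal _
        apply ENNReal.ofReal_le_ofReal
        rw [Real.norm_eq_abs, abs_sub_comm]
        exact le_abs_self _
    _ < ⊤ := hint.2

lemma repu_tendsto {n : ℕ} (ν : Measure (Fin n → ℝ)) [IsFiniteMeasure ν]
    (hQ : ∀ᵐ u ∂ν, ∀ i, 0 ≤ u i) (s : Fin n → ℝ) (hs : ∀ i, s i ≤ 0) :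
    Tendsto (fun m : ℕ => ∫ u, Real.exp (∑ i, (s i - 1/((m:ℝ)+1)) * u i) ∂ν) atTop
      (𝓝 (∫ u, Real.exp (∑ i, s i * u i) ∂ν)) := by
  refine tendsto_integral_of_dominated_convergence (fun _ => (1:ℝ))
    (fun m => (repu_contE _).aestronglyMeasurable) (integrable_const 1)
    (fun m => hQ.mono fun u hu => ?_) (hQ.mono fun u hu => ?_)
  · rw [Real.norm_eq_abs, abs_of_pos (Real.exp_pos _)]
    apply Real.exp_le_one_iff.mpr
    apply Finset.sum_nonpos
    intro i _
    have h1 : 0 < 1/((m:ℝ)+1) := by positivity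
    apply mul_nonpos_of_nonpos_of_nonneg ?_ (hu i)
    linarith [hs i]
  · have h1 : Tendsto (fun m : ℕ => 1/((m:ℝ)+1)) atTop (𝓝 0) :=
      tendsto_one_div_add_atTop_nhds_zero_nat
    have h2 : Tendsto (fun m : ℕ => ∑ i, (s i - 1/((m:ℝ)+1)) * u i) atTop
        (𝓝 (∑ i, s i * u i)) := by
      have heq : ∀ m : ℕ, ∑ i, (s i - 1/((m:ℝ)+1)) * u i
          = (∑ i, s i * u i) - (1/((m:ℝ)+1)) * ∑ i, u i := by
        intro m
        rw [Finset.mul_sum, ← Finset.sum_sub_distrib]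
        exact Finset.sum_congr rfl fun i _ => by ring
      simp only [heq]
      have h3 : Tendsto (fun m : ℕ => (∑ i, s i * u i) - (1/((m:ℝ)+1)) * ∑ i, u i) atTop
          (𝓝 ((∑ i, s i * u i) - 0 * ∑ i, u i)) :=
        (tendsto_const_nhds (x := ∑ i, s i * u i)).sub
          (h1.mul (tendsto_const_nhds (x := ∑ i, u i)))
      simpa using h3
    exact (Real.continuous_exp.tendsto _).comp h2

/-- uniqueness of the representing measure. If two measures on
`ℝ₊ⁿ∖{0}`, both satisfying the integrability conditions, give the same
integral representation on `(−∞,0)ⁿ`, then they coincide. -/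
theorem representing_measure_unique (n : ℕ) (c₀ : ℝ) (c₁ : Fin n → ℝ)
    (μ₁ μ₂ : Measure (Fin n → ℝ)) (hμ₁ : GoodMeasure n μ₁) (hμ₂ : GoodMeasure n μ₂)
    (hsupp₁ : μ₁ (posPart n)ᶜ = 0) (hsupp₂ : μ₂ (posPart n)ᶜ = 0)
    (hint₁ : ∀ s ∈ negOrthant n,
      IntegrableOn (fun u => Real.exp (∑ i, s i * u i) - 1) (posPart n) μ₁)
    (hint₂ : ∀ s ∈ negOrthant n,
      IntegrableOn (fun u => Real.exp (∑ i, s i * u i) - 1) (posPart n) μ₂)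
    (heq : ∀ s ∈ negOrthant n,
      c₀ + ∑ j, c₁ j * s j + ∫ u in posPart n, (Real.exp (∑ i, s i * u i) - 1) ∂μ₁ =
      c₀ + ∑ j, c₁ j * s j + ∫ u in posPart n, (Real.exp (∑ i, s i * u i) - 1) ∂μ₂) :
    μ₁ = μ₂ := by
  classical
  have measP := repu_measP n
  set s₀ : Fin n → ℝ := fun _ => -1 with hs₀def
  have hs₀neg : s₀ ∈ negOrthant n := fun i => by norm_num [hs₀def]
  have heqI : ∀ s ∈ negOrthant n,
      ∫ u in posPart n, (Real.exp (∑ i, s i * u i) - 1) ∂μ₁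
        = ∫ u in posPart n, (Real.exp (∑ i, s i * u i) - 1) ∂μ₂ := by
    intro s hs
    have := heq s hs
    linarith
  set d : (Fin n → ℝ) → ℝ≥0 := fun u => (1 - Real.exp (∑ i, s₀ i * u i)).toNNReal with hddef
  have hdmeas : Measurable d :=
    (measurable_const.sub (repu_contE s₀).measurable).real_toNNReal
  set ν₁ : Measure (Fin n → ℝ) :=
    (μ₁.restrict (posPart n)).withDensity (fun u => ((d u : ℝ≥0) : ℝ≥0∞)) with hν₁def
  set ν₂ : Measure (Fin n → ℝ) :=
    (μ₂.restrict (posPart n)).withDensity (fun u => ((d u : ℝ≥0) : ℝ≥0∞)) with hν₂def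
  haveI : IsFiniteMeasure ν₁ := repu_finite (hint₁ s₀ hs₀neg)
  haveI : IsFiniteMeasure ν₂ := repu_finite (hint₂ s₀ hs₀neg)
  have hQ₁ : ∀ᵐ u ∂ν₁, ∀ i, 0 ≤ u i := by
    have h1 : ∀ᵐ u ∂(μ₁.restrict (posPart n)), ∀ i, 0 ≤ u i :=
      (ae_restrict_mem measP).mono fun u hu => hu.1
    exact h1.filter_mono (withDensity_absolutelyContinuous _ _).ae_le
  have hQ₂ : ∀ᵐ u ∂ν₂, ∀ i, 0 ≤ u i := by
    have h1 : ∀ᵐ u ∂(μ₂.restrict (posPart n)), ∀ i, 0 ≤ u i :=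
      (ae_restrict_mem measP).mono fun u hu => hu.1
    exact h1.filter_mono (withDensity_absolutelyContinuous _ _).ae_le
  -- the Laplace transforms of ν₁, ν₂ agree on the open negative orthant
  have hform : ∀ (μ : Measure (Fin n → ℝ)),
      (∀ s ∈ negOrthant n,
        IntegrableOn (fun u => Real.exp (∑ i, s i * u i) - 1) (posPart n) μ) →
      ∀ s ∈ negOrthant n,
      ∫ u, Real.exp (∑ i, s i * u i)
          ∂((μ.restrict (posPart n)).withDensity (fun u => ((d u : ℝ≥0) : ℝ≥0∞)))
        = (∫ u in posPart n, (Real.exp (∑ i, s i * u i) - 1) ∂μ)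
          - ∫ u in posPart n,
              (Real.exp (∑ i, (fun j => s j + s₀ j) i * u i) - 1) ∂μ := by
    intro μ hint s hs
    have hts : (fun j => s j + s₀ j) ∈ negOrthant n := by
      intro i
      have := hs i
      simp only [hs₀def]
      linarith
    rw [integral_withDensity_eq_integral_smul hdmeas]
    have hcongr : ∀ u ∈ posPart n,
        d u • Real.exp (∑ i, s i * u i)
          = (Real.exp (∑ i, s i * u i) - 1)
            - (Real.exp (∑ i, (fun j => s j + s₀ j) i * u i) - 1) := by
      intro u hu
      have hsum : (0:ℝ) ≤ ∑ i, u i := Finset.sum_nonneg fun i _ => hu.1 i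
      have hnonpos : ∑ i, s₀ i * u i ≤ 0 := by
        apply Finset.sum_nonpos
        intro i _
        simp only [hs₀def]
        nlinarith [hu.1 i]
      have hle1 : Real.exp (∑ i, s₀ i * u i) ≤ 1 := Real.exp_le_one_iff.mpr hnonpos
      have hcoe : ((d u : ℝ≥0) : ℝ) = 1 - Real.exp (∑ i, s₀ i * u i) := by
        simp only [hddef]
        exact Real.coe_toNNReal _ (by linarith)
      have hmul : Real.exp (∑ i, s i * u i) * Real.exp (∑ i, s₀ i * u i)
          = Real.exp (∑ i, (fun j => s j + s₀ j) i * u i) := by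
        rw [← Real.exp_add]
        congr 1
        rw [← Finset.sum_add_distrib]
        exact Finset.sum_congr rfl fun i _ => by ring
      have : d u • Real.exp (∑ i, s i * u i)
          = ((d u : ℝ≥0) : ℝ) * Real.exp (∑ i, s i * u i) := rfl
      rw [this, hcoe]
      rw [← hmul]
      ring
    rw [setIntegral_congr_fun measP hcongr]
    exact integral_sub (hint s hs) (hint _ hts)
  have hνeq : ∀ s ∈ negOrthant n,
      ∫ u, Real.exp (∑ i, s i * u i) ∂ν₁ = ∫ u, Real.exp (∑ i, s i * u i) ∂ν₂ := by
    intro s hs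
    have hts : (fun j => s j + s₀ j) ∈ negOrthant n := by
      intro i
      have := hs i
      simp only [hs₀def]
      linarith
    rw [hν₁def, hν₂def, hform μ₁ hint₁ s hs, hform μ₂ hint₂ s hs,
      heqI s hs, heqI _ hts]
  -- extend to the closed orthant by dominated convergence
  have hνeq' : ∀ s : Fin n → ℝ, (∀ i, s i ≤ 0) →
      ∫ u, Real.exp (∑ i, s i * u i) ∂ν₁ = ∫ u, Real.exp (∑ i, s i * u i) ∂ν₂ := by
    intro s hs
    refine tendsto_nhds_unique (Tendsto.congr (fun m => ?_) (repu_tendsto ν₁ hQ₁ s hs))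
      (repu_tendsto ν₂ hQ₂ s hs)
    refine hνeq _ fun i => ?_
    have h1 : 0 < 1/((m:ℝ)+1) := by positivity
    have := hs i
    linarith
  have hν : ν₁ = ν₂ := repu_laplace_unique n ν₁ ν₂ hQ₁ hQ₂ hνeq'
  -- recover μ from ν
  have hrec : ∀ (μ : Measure (Fin n → ℝ)), μ (posPart n)ᶜ = 0 →
      ((μ.restrict (posPart n)).withDensity
        (fun u => ((d u : ℝ≥0) : ℝ≥0∞))).withDensity
          (fun u => (((d u : ℝ≥0) : ℝ≥0∞))⁻¹) = μ := by
    intro μ hsupp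
    rw [withDensity_inv_same (hdmeas.coe_nnreal_ennreal) ?_ (ae_of_all _ fun u => ENNReal.coe_ne_top)]
    · refine Measure.restrict_eq_self_of_ae_mem ?_
      rw [ae_iff]
      exact hsupp
    · refine (ae_restrict_iff' measP).mpr (ae_of_all _ fun u hu => ?_)
      simp only [ne_eq, ENNReal.coe_eq_zero, hddef, Real.toNNReal_eq_zero, not_le]
      have hpos : (0:ℝ) < ∑ i, u i := by
        obtain ⟨i, hi⟩ := Function.ne_iff.mp hu.2
        refine Finset.sum_pos' (fun j _ => hu.1 j) ⟨i, Finset.mem_univ i, ?_⟩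
        exact lt_of_le_of_ne (hu.1 i) (Ne.symm hi)
      have : ∑ i, s₀ i * u i < 0 := by
        have : ∑ i, s₀ i * u i = -∑ i, u i := by
          rw [← Finset.sum_neg_distrib]
          exact Finset.sum_congr rfl fun i _ => by simp [hs₀def]
        rw [this]
        linarith
      have := Real.exp_lt_one_iff.mpr this
      linarith
  calc μ₁ = ((μ₁.restrict (posPart n)).withDensity
        (fun u => ((d u : ℝ≥0) : ℝ≥0∞))).withDensity
          (fun u => (((d u : ℝ≥0) : ℝ≥0∞))⁻¹) := (hrec μ₁ hsupp₁).symm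
    _ = ((μ₂.restrict (posPart n)).withDensity
        (fun u => ((d u : ℝ≥0) : ℝ≥0∞))).withDensity
          (fun u => (((d u : ℝ≥0) : ℝ≥0∞))⁻¹) := by rw [← hν₁def, ← hν₂def, hν]
    _ = μ₂ := hrec μ₂ hsupp₂
end
end

section
/- Let ψ : (−∞,0)ⁿ → (−∞,0] be a C^∞ function such that for every v > 0 the function s ↦ e^{v ψ(s)} is absolutely monotone on (−∞,0)ⁿ. Then ψ belongs to the class T_n. -/
open MeasureTheory Filter Set

noncomputable section

namespace MemTAux

def Gv (v t : ℝ) : ℝ := Real.exp (v * t) - 1 - v * t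

lemma contDiff_Gv (v : ℝ) {N : WithTop ℕ∞} : ContDiff ℝ N (Gv v) := by
  unfold Gv
  exact ((Real.contDiff_exp.comp (contDiff_const.mul contDiff_id)).sub contDiff_const).sub
    (contDiff_const.mul contDiff_id)

lemma hasDerivAt_lin (v t : ℝ) : HasDerivAt (fun t => v * t) v t := by
  simpa using (hasDerivAt_id t).const_mul v

lemma hasDerivAt_expv (v t : ℝ) :
    HasDerivAt (fun t => Real.exp (v * t)) (v * Real.exp (v * t)) t := by
  have h := (Real.hasDerivAt_exp (v * t)).comp t (hasDerivAt_lin v t)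
  rw [mul_comm (Real.exp (v * t)) v] at h
  exact h

lemma iteratedDeriv_cexp (v : ℝ) : ∀ (j : ℕ) (c t : ℝ),
    iteratedDeriv j (fun t => c * Real.exp (v * t)) t = c * v ^ j * Real.exp (v * t) := by
  intro j
  induction j with
  | zero => intro c t; simp
  | succ j ih =>
    intro c t
    rw [iteratedDeriv_succ']
    have hd : deriv (fun t => c * Real.exp (v * t)) = fun t => (c * v) * Real.exp (v * t) := by
      funext u
      rw [((hasDerivAt_expv v u).const_mul c).deriv]
      ring
    rw [hd, ih (c * v) t]
    ring

lemma hasDerivAt_Gv (v t : ℝ) : HasDerivAt (Gv v) (v * Real.exp (v * t) - v) t := by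
  have h := ((hasDerivAt_expv v t).sub_const 1).sub (hasDerivAt_lin v t)
  exact h

lemma deriv_Gv (v : ℝ) : deriv (Gv v) = fun t => v * Real.exp (v * t) - v :=
  funext fun t => (hasDerivAt_Gv v t).deriv

lemma iteratedDeriv_Gv_add_two (v : ℝ) (j : ℕ) (t : ℝ) :
    iteratedDeriv (j + 2) (Gv v) t = (v * v) * v ^ j * Real.exp (v * t) := by
  rw [iteratedDeriv_succ', deriv_Gv, iteratedDeriv_succ']
  have hd : deriv (fun t => v * Real.exp (v * t) - v) = fun t => (v * v) * Real.exp (v * t) := by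
    funext u
    rw [(((hasDerivAt_expv v u).const_mul v).sub_const v).deriv]
    ring
  rw [hd, iteratedDeriv_cexp]

lemma norm_bound (v a : ℝ) (ha : a ≤ 0) (hv0 : 0 < v) (hv1 : v ≤ 1) (hva : v * (-a) ≤ 1)
    (i : ℕ) : ‖iteratedFDeriv ℝ i (Gv v) a‖ ≤ v ^ 2 * (a ^ 2 + (-a) + 1) := by
  have hva0 : v * a ≤ 0 := mul_nonpos_of_nonneg_of_nonpos hv0.le ha
  have hexp1 : Real.exp (v * a) ≤ 1 := Real.exp_le_one_iff.mpr hva0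
  have hexp0 : 0 < Real.exp (v * a) := Real.exp_pos _
  rw [norm_iteratedFDeriv_eq_norm_iteratedDeriv, Real.norm_eq_abs]
  match i with
  | 0 =>
    rw [iteratedDeriv_zero]
    have habs : |v * a| ≤ 1 := by rw [abs_of_nonpos hva0]; linarith
    have h := Real.abs_exp_sub_one_sub_id_le habs
    unfold Gv
    nlinarith [sq_nonneg a, sq_nonneg v]
  | 1 =>
    rw [iteratedDeriv_one, deriv_Gv]
    have h1 : (1 : ℝ) + v * a ≤ Real.exp (v * a) := by
      have := Real.add_one_le_exp (v * a); linarith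
    have h2 : v * Real.exp (v * a) - v ≤ 0 := by nlinarith
    rw [abs_of_nonpos h2]
    nlinarith [sq_nonneg a, sq_nonneg v]
  | (j + 2) =>
    rw [iteratedDeriv_Gv_add_two]
    have hpj : v ^ j ≤ 1 := pow_le_one₀ hv0.le hv1
    have hpj0 : 0 ≤ v ^ j := pow_nonneg hv0.le j
    have : |(v * v) * v ^ j * Real.exp (v * a)| = (v * v) * v ^ j * Real.exp (v * a) := by
      rw [abs_of_nonneg]; positivity
    rw [this]
    have h3 : v ^ j * Real.exp (v * a) ≤ 1 := mul_le_one₀ hpj hexp0.le hexp1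
    nlinarith [mul_le_mul_of_nonneg_left h3 (mul_nonneg hv0.le hv0.le),
      mul_nonneg (sq_nonneg v) (sq_nonneg a),
      mul_nonneg (mul_nonneg hv0.le hv0.le) (neg_nonneg.mpr ha)]

end MemTAux

open MemTAux in
/-- if `ψ : (−∞,0)ⁿ → (−∞,0]` is `C^∞` and for every `v > 0`
the function `s ↦ e^{v ψ(s)}` is absolutely monotone on `(−∞,0)ⁿ`,
then `ψ ∈ T_n`. -/
theorem memT_of_exp_absMono (n : ℕ) (ψ : (Fin n → ℝ) → ℝ)
    (hsmooth : ContDiffOn ℝ (⊤ : ℕ∞) ψ (negOrthant n))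
    (hnonpos : ∀ x ∈ negOrthant n, ψ x ≤ 0)
    (habs : ∀ v : ℝ, 0 < v → AbsMono n (fun s => Real.exp (v * ψ s))) :
    MemT n ψ := by
  classical
  refine ⟨hsmooth, hnonpos, ?_⟩
  intro k m x hx
  set S := negOrthant n with hSdef
  have hSopen : IsOpen S := by
    have h : S = ⋂ i, {s : Fin n → ℝ | s i < 0} := by ext s; simp [hSdef, negOrthant]
    rw [h]
    exact isOpen_iInter_of_finite fun i => isOpen_lt (continuous_apply i) continuous_const
  have hSu : UniqueDiffOn ℝ S := hSopen.uniqueDiffOn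
  set mv : Fin (k + 1) → (Fin n → ℝ) := fun i => Pi.single (m i) (1 : ℝ) with hmv
  set X : ℝ := iteratedFDerivWithin ℝ (k + 1) ψ S x mv with hXdef
  have ha : ψ x ≤ 0 := hnonpos x hx
  set a := ψ x with hadef
  set D : ℝ := 1 + ∑ i ∈ Finset.range (k + 2), ‖iteratedFDerivWithin ℝ i ψ S x‖ with hDdef
  have hD1 : (1 : ℝ) ≤ D := by
    have : 0 ≤ ∑ i ∈ Finset.range (k + 2), ‖iteratedFDerivWithin ℝ i ψ S x‖ :=
      Finset.sum_nonneg fun _ _ => norm_nonneg _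
    simp only [hDdef]; linarith
  have hDbound : ∀ i, 1 ≤ i → i ≤ k + 1 → ‖iteratedFDerivWithin ℝ i ψ S x‖ ≤ D ^ i := by
    intro i h1 h2
    have hle : ‖iteratedFDerivWithin ℝ i ψ S x‖ ≤ D := by
      have hmem : i ∈ Finset.range (k + 2) := Finset.mem_range.mpr (by omega)
      have := Finset.single_le_sum (f := fun j => ‖iteratedFDerivWithin ℝ j ψ S x‖)
        (fun j _ => norm_nonneg _) hmem
      simp only [hDdef]; linarith
    exact hle.trans (le_self_pow₀ hD1 (by omega))
  set B : ℝ := (Nat.factorial (k + 1) : ℝ) * (a ^ 2 + (-a) + 1) * D ^ (k + 1) with hBdef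
  have hBpos : 0 < B := by
    have h1 : (0 : ℝ) < a ^ 2 + (-a) + 1 := by nlinarith
    have h2 : (0 : ℝ) < (Nat.factorial (k + 1) : ℝ) := by positivity
    have h3 : (0 : ℝ) < D ^ (k + 1) := pow_pos (by linarith) _
    positivity
  have key : ∀ v : ℝ, 0 < v → v ≤ 1 → v * (-a) ≤ 1 → -(B * v) ≤ X := by
    intro v hv0 hv1 hva
    have hψk : ContDiffOn ℝ (k + 1 : ℕ) ψ S := hsmooth.of_le (by exact_mod_cast le_top)
    have hGψ : ContDiffOn ℝ (k + 1 : ℕ) (Gv v ∘ ψ) S :=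
      (contDiff_Gv v).comp_contDiffOn hψk
    have hfun : (fun s => Real.exp (v * ψ s))
        = (v • ψ) + ((Gv v ∘ ψ) + fun _ => (1 : ℝ)) := by
      funext s
      simp only [Pi.add_apply, Pi.smul_apply, smul_eq_mul, Function.comp_apply, Gv]
      ring
    have h0 : 0 ≤ iteratedFDerivWithin ℝ (k + 1) (fun s => Real.exp (v * ψ s)) S x mv :=
      (habs v hv0).2 (k + 1) m x hx
    have hvψ : ContDiffOn ℝ (k + 1 : ℕ) (v • ψ) S := hψk.const_smul v
    have hGψ1 : ContDiffOn ℝ (k + 1 : ℕ) ((Gv v ∘ ψ) + fun _ => (1 : ℝ)) S :=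
      hGψ.add contDiffOn_const
    rw [hfun, iteratedFDerivWithin_add_apply (hvψ x hx) (hGψ1 x hx) hSu hx,
      iteratedFDerivWithin_add_apply (hGψ x hx) contDiffWithinAt_const hSu hx,
      (congrFun (iteratedFDerivWithin_const_of_ne (Nat.succ_ne_zero k) _ _) x).trans (Pi.zero_apply x),
      iteratedFDerivWithin_const_smul_apply (hψk x hx) hSu hx] at h0
    simp only [ContinuousMultilinearMap.add_apply, ContinuousMultilinearMap.smul_apply,
      ContinuousMultilinearMap.zero_apply, add_zero, smul_eq_mul, ← hXdef] at h0
    set E : ℝ := (iteratedFDerivWithin ℝ (k + 1) (Gv v ∘ ψ) S x) mv with hEdef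
    have hEnorm : |E| ≤ ‖iteratedFDerivWithin ℝ (k + 1) (Gv v ∘ ψ) S x‖ := by
      have h := (iteratedFDerivWithin ℝ (k + 1) (Gv v ∘ ψ) S x).le_opNorm mv
      have hprod : (∏ i, ‖mv i‖) = 1 := by
        apply Finset.prod_eq_one
        intro i _
        simp [hmv, Pi.norm_single]
      rw [hprod, mul_one] at h
      simpa [Real.norm_eq_abs] using h
    have hcomp : ‖iteratedFDerivWithin ℝ (k + 1) (Gv v ∘ ψ) S x‖ ≤
        (Nat.factorial (k + 1) : ℝ) * (v ^ 2 * (a ^ 2 + (-a) + 1)) * D ^ (k + 1) := by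
      apply norm_iteratedFDerivWithin_comp_le (N := ((k + 1 : ℕ) : WithTop ℕ∞))
        ((contDiff_Gv v).contDiffOn) hψk le_rfl uniqueDiffOn_univ hSu
        (mapsTo_univ ψ S) hx ?_ hDbound
      intro i _
      rw [iteratedFDerivWithin_univ]
      exact norm_bound v a ha hv0 hv1 hva i
    have hE2 : |E| ≤ v ^ 2 * B := by
      refine (hEnorm.trans hcomp).trans_eq ?_
      simp only [hBdef]; ring
    have habsE := abs_le.mp hE2
    have hvx : v * (-(B * v)) ≤ v * X := by nlinarith
    exact le_of_mul_le_mul_left hvx hv0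
  by_contra hXneg
  push_neg at hXneg
  set v : ℝ := min (min 1 ((-a + 1)⁻¹)) (-X / (2 * B)) with hvdef
  have hA : 0 ≤ -a := by linarith
  have hpos : (0 : ℝ) < -a + 1 := by linarith
  have hv0 : 0 < v := by
    apply lt_min (lt_min one_pos (by positivity))
    have : 0 < -X := by linarith
    positivity
  have hv1 : v ≤ 1 := (min_le_left _ _).trans (min_le_left _ _)
  have hva : v * (-a) ≤ 1 := by
    have h2 : v ≤ (-a + 1)⁻¹ := (min_le_left _ _).trans (min_le_right _ _)
    have h3 : (-a + 1)⁻¹ * (-a + 1) = 1 := inv_mul_cancel₀ (ne_of_gt hpos)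
    have h4 : 0 ≤ (-a + 1)⁻¹ := inv_nonneg.mpr hpos.le
    nlinarith [mul_le_mul_of_nonneg_right h2 hA]
  have hkey := key v hv0 hv1 hva
  have hv2 : v ≤ -X / (2 * B) := min_le_right _ _
  have hBv : B * v ≤ -X / 2 := by
    have h5 : B * (-X / (2 * B)) = -X / 2 := by
      field_simp
    nlinarith [mul_le_mul_of_nonneg_left hv2 hBpos.le]
  linarith
end
end

section
/- The class T_1 is stable under composition: if ψ₁ ∈ T_1 and ψ₂ ∈ T_1, then the function s ↦ ψ₁(ψ₂(s)) belongs to T_1. -/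
open MeasureTheory Filter Set

noncomputable section

/-- `f` is absolutely monotone on `(-∞,0)`: it is `C^∞` there and all of its
derivatives (of all orders, including order `0`) are nonnegative there. -/
def AbsMono1 (f : ℝ → ℝ) : Prop :=
  ContDiffOn ℝ (⊤ : ℕ∞) f (Set.Iio 0) ∧
  ∀ (k : ℕ), ∀ x < (0:ℝ), 0 ≤ iteratedDerivWithin k f (Set.Iio 0) x

/-- `ψ` belongs to the class `T_1`: it is a nonpositive `C^∞` function on `(-∞,0)`
whose derivative is absolutely monotone, i.e. all derivatives of order `≥ 1`
are nonnegative on `(-∞,0)`. -/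
def MemT1 (ψ : ℝ → ℝ) : Prop :=
  ContDiffOn ℝ (⊤ : ℕ∞) ψ (Set.Iio 0) ∧ (∀ x < (0:ℝ), ψ x ≤ 0) ∧
  ∀ (k : ℕ), ∀ x < (0:ℝ), 0 ≤ iteratedDerivWithin (k + 1) ψ (Set.Iio 0) x

namespace MemT1Comp

/-- On the open set `Iio 0`, `iteratedDerivWithin` agrees with `iteratedDeriv`. -/
lemma iterWithin_eq (k : ℕ) (f : ℝ → ℝ) {x : ℝ} (hx : x < 0) :
    iteratedDerivWithin k f (Set.Iio 0) x = iteratedDeriv k f x := by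
  simp only [iteratedDerivWithin, iteratedDeriv]
  rw [iteratedFDerivWithin_of_isOpen (f := f) (𝕜 := ℝ) k isOpen_Iio hx]

/-- Absolutely monotone, phrased with global `iteratedDeriv`. -/
def A (f : ℝ → ℝ) : Prop :=
  ContDiffOn ℝ (⊤ : ℕ∞) f (Set.Iio 0) ∧ ∀ (k : ℕ), ∀ x < (0:ℝ), 0 ≤ iteratedDeriv k f x

lemma A.deriv {f : ℝ → ℝ} (hf : A f) : A (deriv f) := by
  refine ⟨hf.1.deriv_of_isOpen isOpen_Iio (by simp), fun k x hx => ?_⟩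
  rw [← iteratedDeriv_succ']
  exact hf.2 (k + 1) x hx

lemma contDiffAt {f : ℝ → ℝ} (hf : ContDiffOn ℝ (⊤ : ℕ∞) f (Set.Iio 0)) {x : ℝ} (hx : x < 0) :
    ContDiffAt ℝ (⊤ : ℕ∞) f x :=
  hf.contDiffAt (Iio_mem_nhds hx)

lemma diffAt {f : ℝ → ℝ} (hf : ContDiffOn ℝ (⊤ : ℕ∞) f (Set.Iio 0)) {x : ℝ} (hx : x < 0) :
    DifferentiableAt ℝ f x :=
  (contDiffAt hf hx).differentiableAt (by simp)

lemma iter_add {f g : ℝ → ℝ} (hf : ContDiffOn ℝ (⊤ : ℕ∞) f (Set.Iio 0))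
    (hg : ContDiffOn ℝ (⊤ : ℕ∞) g (Set.Iio 0)) (k : ℕ) {x : ℝ} (hx : x < 0) :
    iteratedDeriv k (f + g) x = iteratedDeriv k f x + iteratedDeriv k g x := by
  rw [← iterWithin_eq k (f + g) hx, ← iterWithin_eq k f hx, ← iterWithin_eq k g hx]
  exact iteratedDerivWithin_add (Set.mem_Iio.2 hx) (uniqueDiffOn_Iio 0) (hf.of_le (by exact_mod_cast le_top) x (Set.mem_Iio.2 hx)) (hg.of_le (by exact_mod_cast le_top) x (Set.mem_Iio.2 hx))

/-- Nonnegativity of iterated derivatives of a product, given nonnegativity of the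
derivatives of the factors up to the same order. -/
lemma iter_mul_nonneg : ∀ (k : ℕ), ∀ (f g : ℝ → ℝ),
    ContDiffOn ℝ (⊤ : ℕ∞) f (Set.Iio 0) → ContDiffOn ℝ (⊤ : ℕ∞) g (Set.Iio 0) →
    (∀ j ≤ k, ∀ x < (0:ℝ), 0 ≤ iteratedDeriv j f x) →
    (∀ j ≤ k, ∀ x < (0:ℝ), 0 ≤ iteratedDeriv j g x) →
    ∀ x < (0:ℝ), 0 ≤ iteratedDeriv k (fun y => f y * g y) x := by
  intro k
  induction k with
  | zero =>
    intro f g _ _ hf hg x hx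
    rw [iteratedDeriv_zero]
    exact mul_nonneg (hf 0 le_rfl x hx) (hg 0 le_rfl x hx)
  | succ k IH =>
    intro f g hfs hgs hf hg x hx
    rw [iteratedDeriv_succ']
    have heq : deriv (fun y => f y * g y) =ᶠ[nhds x]
        (fun y => deriv f y * g y) + (fun y => f y * deriv g y) := by
      filter_upwards [Iio_mem_nhds hx] with y hy
      exact deriv_mul (diffAt hfs hy) (diffAt hgs hy)
    rw [heq.iteratedDeriv_eq k]
    have hfs' : ContDiffOn ℝ (⊤ : ℕ∞) (deriv f) (Set.Iio 0) := hfs.deriv_of_isOpen isOpen_Iio (by simp)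
    have hgs' : ContDiffOn ℝ (⊤ : ℕ∞) (deriv g) (Set.Iio 0) := hgs.deriv_of_isOpen isOpen_Iio (by simp)
    rw [iter_add (hfs'.mul hgs) (hfs.mul hgs') k hx]
    have h1 := IH (deriv f) g hfs' hgs
      (fun j hj y hy => by rw [← iteratedDeriv_succ']; exact hf (j+1) (by omega) y hy)
      (fun j hj y hy => hg j (by omega) y hy) x hx
    have h2 := IH f (deriv g) hfs hgs'
      (fun j hj y hy => hf j (by omega) y hy)
      (fun j hj y hy => by rw [← iteratedDeriv_succ']; exact hg (j+1) (by omega) y hy) x hx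
    exact add_nonneg h1 h2

section Comp

variable {ψ₂ : ℝ → ℝ} (hs₂ : ContDiffOn ℝ (⊤ : ℕ∞) ψ₂ (Set.Iio 0))
  (hval : ∀ x < (0:ℝ), ψ₂ x < 0)
  (hd₂ : ∀ (k : ℕ), ∀ x < (0:ℝ), 0 ≤ iteratedDeriv (k + 1) ψ₂ x)

include hs₂ hval hd₂

omit hd₂ in
lemma comp_contDiffOn {f : ℝ → ℝ} (hf : ContDiffOn ℝ (⊤ : ℕ∞) f (Set.Iio 0)) :
    ContDiffOn ℝ (⊤ : ℕ∞) (fun y => f (ψ₂ y)) (Set.Iio 0) :=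
  hf.comp hs₂ (fun y hy => hval y hy)

/-- Key lemma: composing an absolutely monotone function with `ψ₂` yields nonnegative
iterated derivatives of all orders on `(-∞,0)`. -/
lemma comp_nonneg : ∀ (k : ℕ), ∀ (f : ℝ → ℝ), A f →
    ∀ x < (0:ℝ), 0 ≤ iteratedDeriv k (fun y => f (ψ₂ y)) x := by
  intro k
  induction k using Nat.strong_induction_on with
  | _ k IH =>
    match k with
    | 0 =>
      intro f hf x hx
      rw [iteratedDeriv_zero]
      exact hf.2 0 (ψ₂ x) (hval x hx)
    | (m + 1) =>
      intro f hf x hx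
      rw [iteratedDeriv_succ']
      have heq : deriv (fun y => f (ψ₂ y)) =ᶠ[nhds x]
          fun y => (deriv f) (ψ₂ y) * deriv ψ₂ y := by
        filter_upwards [Iio_mem_nhds hx] with y hy
        exact deriv_comp y (diffAt hf.1 (hval y hy)) (diffAt hs₂ hy)
      rw [heq.iteratedDeriv_eq m]
      refine iter_mul_nonneg m (fun y => deriv f (ψ₂ y)) (deriv ψ₂)
        (comp_contDiffOn hs₂ hval hf.deriv.1)
        (hs₂.deriv_of_isOpen isOpen_Iio (by simp))
        (fun j hj y hy => IH j (by omega) (deriv f) hf.deriv y hy)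
        (fun j hj y hy => by rw [← iteratedDeriv_succ']; exact hd₂ j y hy) x hx

end Comp

end MemT1Comp

/-- the class `T_1` is stable under composition: if
`ψ₁, ψ₂ ∈ T_1` (and `ψ₂` takes values in `(−∞,0)`, so that the composition is
defined), then `s ↦ ψ₁(ψ₂(s))` belongs to `T_1`. -/
theorem memT1_comp (ψ₁ ψ₂ : ℝ → ℝ) (hψ₁ : MemT1 ψ₁) (hψ₂ : MemT1 ψ₂)
    (hval : ∀ x < (0:ℝ), ψ₂ x < 0) :
    MemT1 (fun s => ψ₁ (ψ₂ s)) := by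
  obtain ⟨hs₁, hn₁, hd₁⟩ := hψ₁
  obtain ⟨hs₂, _, hd₂⟩ := hψ₂
  -- translate the `Within` hypotheses to global iterated derivatives
  have hd₁' : ∀ (k : ℕ), ∀ x < (0:ℝ), 0 ≤ iteratedDeriv (k + 1) ψ₁ x := fun k x hx => by
    rw [← MemT1Comp.iterWithin_eq (k+1) ψ₁ hx]; exact hd₁ k x hx
  have hd₂' : ∀ (k : ℕ), ∀ x < (0:ℝ), 0 ≤ iteratedDeriv (k + 1) ψ₂ x := fun k x hx => by
    rw [← MemT1Comp.iterWithin_eq (k+1) ψ₂ hx]; exact hd₂ k x hx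
  have hA₁ : MemT1Comp.A (deriv ψ₁) := by
    refine ⟨hs₁.deriv_of_isOpen isOpen_Iio (by simp), fun k x hx => ?_⟩
    rw [← iteratedDeriv_succ']
    exact hd₁' k x hx
  refine ⟨hs₁.comp hs₂ (fun y hy => hval y hy), fun x hx => hn₁ (ψ₂ x) (hval x hx),
    fun k x hx => ?_⟩
  rw [MemT1Comp.iterWithin_eq (k+1) _ hx, iteratedDeriv_succ']
  have heq : deriv (fun s => ψ₁ (ψ₂ s)) =ᶠ[nhds x]
      fun y => (deriv ψ₁) (ψ₂ y) * deriv ψ₂ y := by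
    filter_upwards [Iio_mem_nhds hx] with y hy
    exact deriv_comp y (MemT1Comp.diffAt hs₁ (hval y hy)) (MemT1Comp.diffAt hs₂ hy)
  rw [heq.iteratedDeriv_eq k]
  refine MemT1Comp.iter_mul_nonneg k (fun y => deriv ψ₁ (ψ₂ y)) (deriv ψ₂)
    (MemT1Comp.comp_contDiffOn hs₂ hval hA₁.1)
    (hs₂.deriv_of_isOpen isOpen_Iio (by simp))
    (fun j _ y hy => MemT1Comp.comp_nonneg hs₂ hval hd₂' j (deriv ψ₁) hA₁ y hy)
    (fun j _ y hy => by rw [← iteratedDeriv_succ']; exact hd₂' j y hy) x hx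
end
end

section
/- Let θ ∈ (0,π) and let (ψ_k) be a sequence of functions of class T_n converging pointwise on (−∞,0)ⁿ, each extended to {z ∈ ℂⁿ : Re z_j ≤ 0} by its integral representation ψ_k(z) = c₀^{(k)} + c₁^{(k)}·z + ∫_{ℝ₊ⁿ∖{0}} (e^{z·u} − 1) dμ_k(u). Then the sequence (ψ_k) is uniformly bounded on every compact subset of the cone S_θⁿ. -/
open MeasureTheory Filter Set

noncomputable section

lemma exp_mul_neg_le (x : ℝ) : Real.exp x * (-x) ≤ 1 - Real.exp x := by
  have h1 := Real.add_one_le_exp (-x)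
  have h2 : Real.exp x * Real.exp (-x) = 1 := by rw [← Real.exp_add]; simp
  nlinarith [Real.exp_pos x, mul_le_mul_of_nonneg_left h1 (Real.exp_pos x).le]

lemma norm_exp_I_sub_one (y : ℝ) : ‖Complex.exp (y * Complex.I) - 1‖ ≤ |y| := by
  have h : Complex.exp ((y : ℂ) * Complex.I) - 1 =
      Complex.ofReal (Real.cos y - 1) + Complex.ofReal (Real.sin y) * Complex.I := by
    rw [Complex.exp_mul_I, ← Complex.ofReal_cos, ← Complex.ofReal_sin]; push_cast; ring
  rw [h, Complex.norm_add_mul_I]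
  rw [← Real.sqrt_sq_eq_abs]
  apply Real.sqrt_le_sqrt
  have h1 := Real.sin_sq_le_sq (x := y / 2)
  have h2 : Real.cos (2 * (y / 2)) = 2 * Real.cos (y / 2) ^ 2 - 1 := Real.cos_two_mul _
  have h3 := Real.sin_sq_add_cos_sq (y / 2)
  have h4 := Real.sin_sq_add_cos_sq y
  have h5 : 2 * (y / 2) = y := by ring
  rw [h5] at h2
  nlinarith

lemma norm_exp_sub_one_cone {c : ℝ} (hc : 0 ≤ c) {ζ : ℂ} (hre : ζ.re ≤ 0)
    (him : |ζ.im| ≤ c * (-ζ.re)) :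
    ‖Complex.exp ζ - 1‖ ≤ (c + 1) * (1 - Real.exp ζ.re) := by
  have key : Complex.exp ζ - 1 =
      Complex.exp (ζ.re : ℂ) * (Complex.exp (ζ.im * Complex.I) - 1)
        + (Complex.exp (ζ.re : ℂ) - 1) := by
    rw [mul_sub, ← Complex.exp_add, Complex.re_add_im]; ring
  have hnexp : ‖Complex.exp (ζ.re : ℂ)‖ = Real.exp ζ.re := by
    simp [Complex.norm_exp]
  have hnexp1 : ‖Complex.exp (ζ.re : ℂ) - 1‖ = 1 - Real.exp ζ.re := by
    rw [← Complex.ofReal_exp, ← Complex.ofReal_one, ← Complex.ofReal_sub, Complex.norm_real, Real.norm_eq_abs,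
      abs_of_nonpos (by simp [Real.exp_le_one_iff, hre] : Real.exp ζ.re - 1 ≤ 0)]
    ring
  calc ‖Complex.exp ζ - 1‖
      ≤ ‖Complex.exp (ζ.re : ℂ) * (Complex.exp (ζ.im * Complex.I) - 1)‖
        + ‖Complex.exp (ζ.re : ℂ) - 1‖ := by rw [key]; exact norm_add_le _ _
    _ ≤ Real.exp ζ.re * |ζ.im| + (1 - Real.exp ζ.re) := by
        rw [norm_mul, hnexp, hnexp1]
        have := norm_exp_I_sub_one ζ.im
        gcongr
    _ ≤ Real.exp ζ.re * (c * (-ζ.re)) + (1 - Real.exp ζ.re) := by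
        gcongr
    _ ≤ c * (1 - Real.exp ζ.re) + (1 - Real.exp ζ.re) := by
        have := exp_mul_neg_le ζ.re
        nlinarith [Real.exp_pos ζ.re]
    _ = (c + 1) * (1 - Real.exp ζ.re) := by ring


lemma measurableSet_posPart (n : ℕ) : MeasurableSet (_root_.posPart n) := by
  have h1 : MeasurableSet {u : Fin n → ℝ | ∀ i, 0 ≤ u i} :=
    by
    rw [Set.setOf_forall]
    exact MeasurableSet.iInter fun i => measurableSet_le measurable_const (measurable_pi_apply i)
  have : _root_.posPart n = {u : Fin n → ℝ | ∀ i, 0 ≤ u i} ∩ {(0 : Fin n → ℝ)}ᶜ := by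
    ext u; simp [_root_.posPart, Set.mem_setOf_eq, and_comm]
  rw [this]
  exact h1.inter (measurableSet_singleton 0).compl

lemma measurableSet_smallBox (n : ℕ) (δ : ℝ) : MeasurableSet (smallBox n δ) := by
  have h1 : MeasurableSet {u : Fin n → ℝ | ∀ i, 0 ≤ u i ∧ u i < δ} :=
by
    rw [Set.setOf_forall]
    exact MeasurableSet.iInter fun i =>
      ((measurableSet_le measurable_const (measurable_pi_apply i)).inter
        (measurableSet_lt (measurable_pi_apply i) measurable_const))
  have : smallBox n δ = {u : Fin n → ℝ | ∀ i, 0 ≤ u i ∧ u i < δ} ∩ {(0 : Fin n → ℝ)}ᶜ := by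
    ext u; simp [smallBox, Set.mem_setOf_eq, and_comm]
  rw [this]
  exact h1.inter (measurableSet_singleton 0).compl

lemma measurableSet_farPart (n : ℕ) (δ : ℝ) : MeasurableSet (farPart n δ) := by
  have h1 : MeasurableSet {u : Fin n → ℝ | ∀ i, 0 ≤ u i} :=
    by
    rw [Set.setOf_forall]
    exact MeasurableSet.iInter fun i => measurableSet_le measurable_const (measurable_pi_apply i)
  have h2 : MeasurableSet {u : Fin n → ℝ | ∀ i, u i < δ} :=
    by
    rw [Set.setOf_forall]
    exact MeasurableSet.iInter fun i => measurableSet_lt (measurable_pi_apply i) measurable_const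
  exact h1.inter h2.compl

lemma cont_one_sub_exp {n : ℕ} (s : Fin n → ℝ) :
    Continuous fun u : Fin n → ℝ => 1 - Real.exp (∑ i, s i * u i) := by
  exact continuous_const.sub (Real.continuous_exp.comp
    (continuous_finset_sum _ fun i _ => continuous_const.mul (continuous_apply i)))

lemma integrable_one_sub_exp {n : ℕ} {μ : Measure (Fin n → ℝ)} (hμ : GoodMeasure n μ)
    (s : Fin n → ℝ) (hs : ∀ i, s i ≤ 0) :
    IntegrableOn (fun u => 1 - Real.exp (∑ i, s i * u i)) (_root_.posPart n) μ := by
  obtain ⟨δ, hδ, hint, hfin⟩ := hμ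
  have hsub : posPart n ⊆ smallBox n δ ∪ farPart n δ := by
    intro u hu
    by_cases h : ∀ i, u i < δ
    · exact Or.inl ⟨fun i => ⟨hu.1 i, h i⟩, hu.2⟩
    · exact Or.inr ⟨hu.1, h⟩
  apply IntegrableOn.mono_set _ hsub
  apply IntegrableOn.union
  · -- on smallBox, dominate by ∑ (-s i) * u i
    have hg : IntegrableOn (fun u => ∑ i, (-s i) * u i) (smallBox n δ) μ :=
      integrable_finset_sum _ fun i _ => (hint i).const_mul (-s i)
    apply Integrable.mono' hg ((cont_one_sub_exp s).aestronglyMeasurable)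
    filter_upwards [ae_restrict_mem (measurableSet_smallBox n δ)] with u hu
    have hxu : ∑ i, s i * u i ≤ 0 :=
      Finset.sum_nonpos fun i _ => mul_nonpos_of_nonpos_of_nonneg (hs i) (hu.1 i).1
    have h1 : Real.exp (∑ i, s i * u i) ≤ 1 := Real.exp_le_one_iff.2 hxu
    rw [Real.norm_eq_abs, abs_of_nonneg (by linarith)]
    have := Real.add_one_le_exp (∑ i, s i * u i)
    have heq : ∑ i, (-s i) * u i = -(∑ i, s i * u i) := by
      rw [← Finset.sum_neg_distrib]; congr 1; ext i; ring
    rw [heq]; linarith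
  · -- on farPart, bounded by 1 with finite measure
    have hg : IntegrableOn (fun _ : Fin n → ℝ => (1 : ℝ)) (farPart n δ) μ :=
      (integrableOn_const_iff).2 (Or.inr hfin)
    apply Integrable.mono' hg ((cont_one_sub_exp s).aestronglyMeasurable)
    filter_upwards [ae_restrict_mem (measurableSet_farPart n δ)] with u hu
    have hxu : ∑ i, s i * u i ≤ 0 :=
      Finset.sum_nonpos fun i _ => mul_nonpos_of_nonpos_of_nonneg (hs i) (hu.1 i)
    have h1 : Real.exp (∑ i, s i * u i) ≤ 1 := Real.exp_le_one_iff.2 hxu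
    have h2 := Real.exp_pos (∑ i, s i * u i)
    rw [Real.norm_eq_abs, abs_of_nonneg (by linarith)]
    linarith

/-- a pointwise convergent sequence of functions of class
`T_n`, each extended to `{Re z ≤ 0}` by its integral representation, is
uniformly bounded on every compact subset of the cone `S_θⁿ`, `θ ∈ (0,π)`. -/
theorem uniformly_bounded_on_cone (n : ℕ) (θ : ℝ) (hθ : θ ∈ Set.Ioo 0 Real.pi)
    (ψk : ℕ → (Fin n → ℝ) → ℝ) (hk : ∀ k, MemT n (ψk k))
    (c₀ : ℕ → ℝ) (hc₀ : ∀ k, c₀ k ≤ 0)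
    (c₁ : ℕ → Fin n → ℝ) (hc₁ : ∀ k j, 0 ≤ c₁ k j)
    (μ : ℕ → Measure (Fin n → ℝ)) (hμ : ∀ k, GoodMeasure n (μ k))
    (hsupp : ∀ k, (μ k) (posPart n)ᶜ = 0)
    (Ψ : ℕ → (Fin n → ℂ) → ℂ)
    (hrep : ∀ k, ∀ z : Fin n → ℂ, (∀ j, (z j).re ≤ 0) →
      Ψ k z = (c₀ k : ℂ) + ∑ j, (c₁ k j : ℂ) * z j +
        ∫ u in posPart n, (Complex.exp (∑ i, z i * (u i : ℂ)) - 1) ∂(μ k))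
    (hrestrict : ∀ k, ∀ s ∈ negOrthant n, Ψ k (fun i => (s i : ℂ)) = (ψk k s : ℂ))
    (ψ : (Fin n → ℝ) → ℝ)
    (hconv : ∀ s ∈ negOrthant n, Tendsto (fun k => ψk k s) atTop (nhds (ψ s))) :
    ∀ K : Set (Fin n → ℂ), IsCompact K →
      K ⊆ {z : Fin n → ℂ | ∀ j, (z j).re ≤ 0 ∧
            |(z j).im| ≤ Real.cot (θ / 2) * (-(z j).re)} →
      ∃ M : ℝ, ∀ k, ∀ z ∈ K, ‖Ψ k z‖ ≤ M := by

  intro K hK hKsub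
  set c := Real.cot (θ / 2) with hc_def
  have hc : 0 < c := by
    rw [hc_def, Real.cot_eq_cos_div_sin]
    apply div_pos
    · exact Real.cos_pos_of_mem_Ioo ⟨by nlinarith [hθ.1, Real.pi_pos], by nlinarith [hθ.2, Real.pi_pos]⟩
    · exact Real.sin_pos_of_pos_of_lt_pi (by linarith [hθ.1]) (by nlinarith [hθ.2, Real.pi_pos])
  obtain ⟨R₀, hR₀⟩ := hK.isBounded.exists_norm_le
  set R := max R₀ 0 + 1 with hR_def
  have hRpos : 0 < R := by
    have := le_max_right R₀ 0; rw [hR_def]; linarith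
  have hzR : ∀ z ∈ K, ∀ j, ‖z j‖ ≤ R := by
    intro z hz j
    refine le_trans (norm_le_pi_norm z j) ?_
    have := hR₀ z hz
    have := le_max_left R₀ 0
    rw [hR_def]; linarith
  set s : Fin n → ℝ := fun _ => -R with hs_def
  have hsneg : s ∈ negOrthant n := fun i => by simp only [hs_def]; linarith
  have hsle : ∀ i, s i ≤ 0 := fun i => (hsneg i).le
  obtain ⟨b, hb⟩ := (hconv s hsneg).bddBelow_range
  set B := -b with hB_def
  have hBk : ∀ k, -ψk k s ≤ B := fun k => neg_le_neg (hb ⟨k, rfl⟩)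
  have hB0 : 0 ≤ B := le_trans (neg_nonneg.2 ((hk 0).2.1 s hsneg)) (hBk 0)
  refine ⟨(c + 3) * B, fun k z hz => ?_⟩
  have hz0 : ∀ j, (z j).re ≤ 0 := fun j => ((hKsub hz) j).1
  have hzRre : ∀ j, -R ≤ (z j).re := by
    intro j
    have h1 := hzR z hz j
    have h2 : |(z j).re| ≤ ‖z j‖ := Complex.abs_re_le_norm (z j)
    have := abs_le.1 (h2.trans h1)
    linarith [this.1]
  -- real representation at s
  have hreρ := hrep k (fun i => ((s i : ℝ) : ℂ)) (fun j => by simp only [hs_def, Complex.ofReal_re]; linarith)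
  rw [hrestrict k s hsneg] at hreρ
  have hFg : ∀ u : Fin n → ℝ,
      (Complex.exp (∑ i, ((s i : ℝ) : ℂ) * ((u i : ℝ) : ℂ)) - 1)
        = (((Real.exp (∑ i, s i * u i) - 1 : ℝ)) : ℂ) := by
    intro u
    have h1 : (∑ i, ((s i : ℝ) : ℂ) * ((u i : ℝ) : ℂ)) = (((∑ i, s i * u i : ℝ)) : ℂ) := by
      push_cast; rfl
    rw [h1, ← Complex.ofReal_exp]; push_cast; ring
  simp only [hFg] at hreρ
  have hreal : ψk k s = c₀ k + (∑ j, c₁ k j * s j)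
      + ∫ u in _root_.posPart n, (Real.exp (∑ i, s i * u i) - 1) ∂(μ k) := by
    have hcast : ∫ u in _root_.posPart n, ((Real.exp (∑ i, s i * u i) - 1 : ℝ) : ℂ) ∂(μ k)
        = ((∫ u in _root_.posPart n, (Real.exp (∑ i, s i * u i) - 1) ∂(μ k) : ℝ) : ℂ) :=
      integral_ofReal
    rw [hcast] at hreρ
    exact_mod_cast hreρ
  set I := ∫ u in _root_.posPart n, (1 - Real.exp (∑ i, s i * u i)) ∂(μ k) with hI_def
  have hIg : ∫ u in _root_.posPart n, (Real.exp (∑ i, s i * u i) - 1) ∂(μ k) = -I := by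
    rw [hI_def, ← integral_neg]
    apply integral_congr_ae (ae_of_all _ fun u => by ring)
  have hI0 : 0 ≤ I := by
    apply setIntegral_nonneg (measurableSet_posPart n)
    intro u hu
    have hxu : ∑ i, s i * u i ≤ 0 :=
      Finset.sum_nonpos fun i _ => mul_nonpos_of_nonpos_of_nonneg (hsle i) (hu.1 i)
    simp [sub_nonneg, Real.exp_le_one_iff, hxu]
  have hsum_s : ∑ j, c₁ k j * s j = -∑ j, c₁ k j * R := by
    rw [← Finset.sum_neg_distrib]
    apply Finset.sum_congr rfl
    intro j _; simp only [hs_def]; ring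
  have hkey : -ψk k s = -c₀ k + (∑ j, c₁ k j * R) + I := by
    rw [hreal, hIg, hsum_s]; ring
  have hsumR0 : 0 ≤ ∑ j, c₁ k j * R :=
    Finset.sum_nonneg fun j _ => mul_nonneg (hc₁ k j) hRpos.le
  have hc00 : 0 ≤ -c₀ k := neg_nonneg.2 (hc₀ k)
  have hBineq := hBk k
  have hc₀B : -c₀ k ≤ B := by linarith
  have hsumB : ∑ j, c₁ k j * R ≤ B := by linarith
  have hIB : I ≤ B := by linarith
  rw [hrep k z hz0]
  have hdom : IntegrableOn (fun u => (c + 1) * (1 - Real.exp (∑ i, s i * u i)))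
      (_root_.posPart n) (μ k) := (integrable_one_sub_exp (hμ k) s hsle).const_mul _
  have hnormint : ‖∫ u in _root_.posPart n,
      (Complex.exp (∑ i, z i * ((u i : ℝ) : ℂ)) - 1) ∂(μ k)‖ ≤ (c + 1) * I := by
    calc ‖∫ u in _root_.posPart n, (Complex.exp (∑ i, z i * ((u i : ℝ) : ℂ)) - 1) ∂(μ k)‖
        ≤ ∫ u in _root_.posPart n, ‖Complex.exp (∑ i, z i * ((u i : ℝ) : ℂ)) - 1‖ ∂(μ k) :=
          norm_integral_le_integral_norm _
      _ ≤ ∫ u in _root_.posPart n, (c + 1) * (1 - Real.exp (∑ i, s i * u i)) ∂(μ k) := by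
          apply integral_mono_of_nonneg (ae_of_all _ fun u => norm_nonneg _) hdom
          filter_upwards [ae_restrict_mem (measurableSet_posPart n)] with u hu
          set ζ : ℂ := ∑ i, z i * ((u i : ℝ) : ℂ) with hζ_def
          have hζre : ζ.re = ∑ i, (z i).re * u i := by
            rw [hζ_def, Complex.re_sum]
            apply Finset.sum_congr rfl
            intro i _; simp [Complex.mul_re]
          have hζim : ζ.im = ∑ i, (z i).im * u i := by
            rw [hζ_def, Complex.im_sum]
            apply Finset.sum_congr rfl
            intro i _; simp [Complex.mul_im]
          have h1 : ζ.re ≤ 0 := by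
            rw [hζre]
            exact Finset.sum_nonpos fun i _ =>
              mul_nonpos_of_nonpos_of_nonneg (hz0 i) (hu.1 i)
          have h2 : |ζ.im| ≤ c * (-ζ.re) := by
            rw [hζim, hζre]
            calc |∑ i, (z i).im * u i| ≤ ∑ i, |(z i).im * u i| :=
                  Finset.abs_sum_le_sum_abs _ _
              _ ≤ ∑ i, c * (-(z i).re) * u i := by
                  apply Finset.sum_le_sum
                  intro i _
                  rw [abs_mul, abs_of_nonneg (hu.1 i)]
                  exact mul_le_mul_of_nonneg_right ((hKsub hz) i).2 (hu.1 i)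
              _ = c * (-∑ i, (z i).re * u i) := by
                  rw [← Finset.sum_neg_distrib, Finset.mul_sum]
                  apply Finset.sum_congr rfl
                  intro i _; ring
          refine (norm_exp_sub_one_cone hc.le h1 h2).trans ?_
          have hmono : ∑ i, s i * u i ≤ ζ.re := by
            rw [hζre]
            apply Finset.sum_le_sum
            intro i _
            apply mul_le_mul_of_nonneg_right _ (hu.1 i)
            simp only [hs_def]
            exact hzRre i
          have : 1 - Real.exp ζ.re ≤ 1 - Real.exp (∑ i, s i * u i) :=
            sub_le_sub_left (Real.exp_le_exp.2 hmono) 1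
          have hc1 : (0:ℝ) ≤ c + 1 := by linarith
          exact mul_le_mul_of_nonneg_left this hc1
      _ = (c + 1) * I := by rw [hI_def, integral_const_mul]
  have hnc₀ : ‖((c₀ k : ℝ) : ℂ)‖ = -c₀ k := by
    rw [Complex.norm_real, Real.norm_eq_abs, abs_of_nonpos (hc₀ k)]
  have hnsum : ‖∑ j, ((c₁ k j : ℝ) : ℂ) * z j‖ ≤ ∑ j, c₁ k j * R := by
    calc ‖∑ j, ((c₁ k j : ℝ) : ℂ) * z j‖ ≤ ∑ j, ‖((c₁ k j : ℝ) : ℂ) * z j‖ :=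
          norm_sum_le _ _
      _ ≤ ∑ j, c₁ k j * R := by
          apply Finset.sum_le_sum
          intro j _
          rw [norm_mul, Complex.norm_real, Real.norm_eq_abs, abs_of_nonneg (hc₁ k j)]
          exact mul_le_mul_of_nonneg_left (hzR z hz j) (hc₁ k j)
  calc ‖((c₀ k : ℝ) : ℂ) + ∑ j, ((c₁ k j : ℝ) : ℂ) * z j
        + ∫ u in _root_.posPart n, (Complex.exp (∑ i, z i * ((u i : ℝ) : ℂ)) - 1) ∂(μ k)‖
      ≤ ‖((c₀ k : ℝ) : ℂ)‖ + ‖∑ j, ((c₁ k j : ℝ) : ℂ) * z j‖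
        + ‖∫ u in _root_.posPart n, (Complex.exp (∑ i, z i * ((u i : ℝ) : ℂ)) - 1) ∂(μ k)‖ :=
        norm_add₃_le
    _ ≤ B + B + (c + 1) * B := by
        have e1 : ‖((c₀ k : ℝ) : ℂ)‖ ≤ B := by rw [hnc₀]; exact hc₀B
        have e2 : ‖∑ j, ((c₁ k j : ℝ) : ℂ) * z j‖ ≤ B := hnsum.trans hsumB
        have e3 := hnormint.trans (mul_le_mul_of_nonneg_left hIB (by linarith : (0:ℝ) ≤ c + 1))
        linarith
    _ ≤ (c + 3) * B := by nlinarith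
end
end

section
/- Let f : ℝ → [0,∞) be a nonnegative nondecreasing function with f(r) = 0 for r < 0, and define w(s) = ∫₀^∞ e^{rs} f(r) dr for s < 0 (assumed finite). Then for every u ≥ 0 the function s ↦ (1 − e^{us}) w(s) is absolutely monotone on (−∞,0); indeed, (1 − e^{us}) w(s) = ∫₀^∞ e^{rs} g(r) dr where g(r) = f(r) − f(r−u) ≥ 0. -/
open MeasureTheory Filter Set

set_option maxHeartbeats 800000
noncomputable section

lemma myPow_le_exp_mul_fact (x : ℝ) (hx : 0 ≤ x) (k : ℕ) :
    x ^ k ≤ (Nat.factorial k : ℝ) * Real.exp x := by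
  have h := Real.sum_le_exp_of_nonneg hx (k + 1)
  have h1 : x ^ k / (Nat.factorial k : ℝ) ≤
      ∑ i ∈ Finset.range (k + 1), x ^ i / (Nat.factorial i : ℝ) :=
    Finset.single_le_sum (f := fun i => x ^ i / (Nat.factorial i : ℝ))
      (fun i _ => by positivity) (Finset.self_mem_range_succ k)
  have hk : (0 : ℝ) < (Nat.factorial k : ℝ) := by positivity
  have h2 := h1.trans h
  rw [div_le_iff₀ hk] at h2
  linarith [h2]

lemma myPow_mul_exp_bound (k : ℕ) {c : ℝ} (hc : c < 0) :
    ∃ C : ℝ, ∀ r : ℝ, 0 ≤ r → r ^ k * Real.exp (r * c) ≤ C := by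
  have hnc : 0 < -c := neg_pos.mpr hc
  refine ⟨(Nat.factorial k : ℝ) / (-c) ^ k, fun r hr => ?_⟩
  have key : (r * -c) ^ k ≤ (Nat.factorial k : ℝ) * Real.exp (r * -c) :=
    myPow_le_exp_mul_fact _ (mul_nonneg hr hnc.le) k
  rw [mul_pow] at key
  rw [le_div_iff₀ (by positivity : (0:ℝ) < (-c) ^ k)]
  have hE : Real.exp (r * -c) = (Real.exp (r * c))⁻¹ := by
    rw [← Real.exp_neg]; ring_nf
  rw [hE] at key
  have hEpos : 0 < Real.exp (r * c) := Real.exp_pos _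
  calc r ^ k * Real.exp (r * c) * (-c) ^ k
      = (r ^ k * (-c) ^ k) * Real.exp (r * c) := by ring
    _ ≤ ((Nat.factorial k : ℝ) * (Real.exp (r * c))⁻¹) * Real.exp (r * c) :=
        mul_le_mul_of_nonneg_right key hEpos.le
    _ = (Nat.factorial k : ℝ) := by field_simp

/-- `k`-th "moment" Laplace-type transform. -/
def lapT (g : ℝ → ℝ) (k : ℕ) (s : ℝ) : ℝ :=
  ∫ r in Set.Ici (0:ℝ), r ^ k * Real.exp (r * s) * g r

lemma lapT_int (g : ℝ → ℝ) (hg0 : ∀ r, 0 ≤ g r) (hgm : Measurable g)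
    (hint : ∀ s < (0:ℝ), IntegrableOn (fun r => Real.exp (r * s) * g r) (Set.Ici 0))
    (k : ℕ) {s : ℝ} (hs : s < 0) :
    IntegrableOn (fun r => r ^ k * Real.exp (r * s) * g r) (Set.Ici 0) := by
  obtain ⟨C, hC⟩ := myPow_mul_exp_bound k (show s / 2 < 0 by linarith)
  have hC0 : 0 ≤ C := le_trans (by positivity) (hC 1 zero_le_one)
  apply Integrable.mono (((hint (s/2) (by linarith))).const_mul C)
  · exact (((measurable_id.pow_const k).mul
      ((measurable_id.mul_const s).exp)).mul hgm).aestronglyMeasurable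
  · filter_upwards [ae_restrict_mem measurableSet_Ici] with r hr
    have hr' : (0:ℝ) ≤ r := hr
    have hee : Real.exp (r * s) = Real.exp (r * (s/2)) * Real.exp (r * (s/2)) := by
      rw [← Real.exp_add]; ring_nf
    have h1 : 0 ≤ r ^ k * Real.exp (r * s) * g r := by
      have := hg0 r; positivity
    have hCr := hC r hr'
    have hEpos : 0 < Real.exp (r * (s/2)) := Real.exp_pos _
    have h2 : 0 ≤ C * (Real.exp (r * (s/2)) * g r) :=
      mul_nonneg hC0 (mul_nonneg hEpos.le (hg0 r))
    rw [Real.norm_eq_abs, Real.norm_eq_abs, abs_of_nonneg h1, abs_of_nonneg h2, hee]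
    calc r ^ k * (Real.exp (r * (s/2)) * Real.exp (r * (s/2))) * g r
        = (r ^ k * Real.exp (r * (s/2))) * (Real.exp (r * (s/2)) * g r) := by ring
      _ ≤ C * (Real.exp (r * (s/2)) * g r) :=
          mul_le_mul_of_nonneg_right hCr (mul_nonneg hEpos.le (hg0 r))

lemma lapT_hasDeriv (g : ℝ → ℝ) (hg0 : ∀ r, 0 ≤ g r) (hgm : Measurable g)
    (hint : ∀ s < (0:ℝ), IntegrableOn (fun r => Real.exp (r * s) * g r) (Set.Ici 0))
    (k : ℕ) {s : ℝ} (hs : s < 0) :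
    HasDerivAt (lapT g k) (lapT g (k+1) s) s := by
  obtain ⟨C, hC⟩ := myPow_mul_exp_bound (k+1) (show s / 4 < 0 by linarith)
  have hε : (0:ℝ) < -s/2 := by linarith
  have hmeas : ∀ x : ℝ, AEStronglyMeasurable (fun r => r ^ k * Real.exp (r * x) * g r)
      (volume.restrict (Set.Ici (0:ℝ))) := fun x =>
    (((measurable_id.pow_const k).mul ((measurable_id.mul_const x).exp)).mul
      hgm).aestronglyMeasurable
  have key := hasDerivAt_integral_of_dominated_loc_of_deriv_le
    (μ := volume.restrict (Set.Ici (0:ℝ)))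
    (F := fun x r => r ^ k * Real.exp (r * x) * g r)
    (F' := fun x r => r ^ (k+1) * Real.exp (r * x) * g r)
    (bound := fun r => C * (Real.exp (r * (s/4)) * g r))
    (Metric.ball_mem_nhds s hε) (Eventually.of_forall hmeas) (lapT_int g hg0 hgm hint k hs)
    ((((measurable_id.pow_const (k+1)).mul ((measurable_id.mul_const s).exp)).mul
      hgm).aestronglyMeasurable)
    ?_ (((hint (s/4) (by linarith))).const_mul C) ?_
  · exact key.2
  · filter_upwards [ae_restrict_mem measurableSet_Ici] with r hr x hx
    have hr' : (0:ℝ) ≤ r := hr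
    have hx2 : x ≤ s / 2 := by
      rw [Metric.mem_ball, Real.dist_eq, abs_sub_lt_iff] at hx
      linarith [hx.1]
    have h1 : 0 ≤ r ^ (k+1) * Real.exp (r * x) * g r := by
      have := hg0 r; positivity
    rw [Real.norm_eq_abs, abs_of_nonneg h1]
    have hEx : Real.exp (r * x) ≤ Real.exp (r * (s/2)) :=
      Real.exp_le_exp.mpr (mul_le_mul_of_nonneg_left hx2 hr')
    have hee : Real.exp (r * (s/2)) = Real.exp (r * (s/4)) * Real.exp (r * (s/4)) := by
      rw [← Real.exp_add]; ring_nf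
    have hCr := hC r hr'
    have hE4 : 0 < Real.exp (r * (s/4)) := Real.exp_pos _
    calc r ^ (k+1) * Real.exp (r * x) * g r
        ≤ r ^ (k+1) * Real.exp (r * (s/2)) * g r :=
          mul_le_mul_of_nonneg_right
            (mul_le_mul_of_nonneg_left hEx (by positivity)) (hg0 r)
      _ = (r ^ (k+1) * Real.exp (r * (s/4))) * (Real.exp (r * (s/4)) * g r) := by
          rw [hee]; ring
      _ ≤ C * (Real.exp (r * (s/4)) * g r) :=
          mul_le_mul_of_nonneg_right hCr (mul_nonneg hE4.le (hg0 r))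
  · refine Eventually.of_forall (fun r x _ => ?_)
    have h1 : HasDerivAt (fun x : ℝ => Real.exp (r * x)) (Real.exp (r * x) * r) x := by
      simpa using ((hasDerivAt_id x).const_mul r).exp
    have h2 := (h1.const_mul (r ^ k)).mul_const (g r)
    exact h2.congr_deriv (by ring)

lemma lapT_iter (g : ℝ → ℝ) (hg0 : ∀ r, 0 ≤ g r) (hgm : Measurable g)
    (hint : ∀ s < (0:ℝ), IntegrableOn (fun r => Real.exp (r * s) * g r) (Set.Ici 0))
    (k : ℕ) :
    Set.EqOn (iteratedDerivWithin k (lapT g 0) (Set.Iio 0)) (lapT g k) (Set.Iio 0) := by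
  induction k with
  | zero => intro x _; simp [iteratedDerivWithin_zero]
  | succ k ih =>
    intro x hx
    have hU : UniqueDiffOn ℝ (Set.Iio (0:ℝ)) := isOpen_Iio.uniqueDiffOn
    rw [iteratedDerivWithin_succ,
      derivWithin_congr ih (ih hx),
      derivWithin_of_isOpen isOpen_Iio hx]
    exact (lapT_hasDeriv g hg0 hgm hint k hx).deriv

/-- The complex Laplace transform. -/
def lapC (g : ℝ → ℝ) (z : ℂ) : ℂ :=
  ∫ r in Set.Ici (0:ℝ), Complex.exp (r * z) * (g r : ℂ)

lemma lapC_ofReal (g : ℝ → ℝ) (s : ℝ) : lapC g (s : ℂ) = ((lapT g 0 s : ℝ) : ℂ) := by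
  unfold lapC lapT
  have h : (fun r : ℝ => Complex.exp (r * s) * (g r : ℂ)) =
      fun r : ℝ => (((r ^ 0 * Real.exp (r * s) * g r : ℝ)) : ℂ) := by
    funext r
    rw [pow_zero, one_mul, Complex.ofReal_mul, Complex.ofReal_exp, Complex.ofReal_mul]
  rw [h]
  exact integral_ofReal

lemma lapC_hasDeriv (g : ℝ → ℝ) (hg0 : ∀ r, 0 ≤ g r) (hgm : Measurable g)
    (hint : ∀ s < (0:ℝ), IntegrableOn (fun r => Real.exp (r * s) * g r) (Set.Ici 0))
    {z : ℂ} (hz : z.re < 0) :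
    HasDerivAt (lapC g) (∫ r in Set.Ici (0:ℝ), r * Complex.exp (r * z) * (g r : ℂ)) z := by
  set s : ℝ := z.re with hsdef
  obtain ⟨C, hC⟩ := myPow_mul_exp_bound 1 (show s / 4 < 0 by linarith)
  have hε : (0:ℝ) < -s/2 := by linarith
  have hmeas : ∀ x : ℂ, AEStronglyMeasurable (fun r : ℝ => Complex.exp (r * x) * (g r : ℂ))
      (volume.restrict (Set.Ici (0:ℝ))) := fun x =>
    (((Complex.measurable_ofReal.mul_const x).cexp).mul
      (Complex.measurable_ofReal.comp hgm)).aestronglyMeasurable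
  have hintC : IntegrableOn (fun r : ℝ => Complex.exp (r * z) * (g r : ℂ)) (Set.Ici 0) := by
    apply Integrable.mono ((hint s hz).norm)
    · exact hmeas z
    · filter_upwards [ae_restrict_mem measurableSet_Ici] with r hr
      have hr' : (0:ℝ) ≤ r := hr
      rw [norm_norm, norm_mul, Complex.norm_exp]
      have hre : ((r : ℂ) * z).re = r * s := by simp [Complex.mul_re, hsdef]
      rw [hre, Complex.norm_real, Real.norm_eq_abs, abs_of_nonneg (hg0 r),
        Real.norm_eq_abs, abs_of_nonneg (mul_nonneg (Real.exp_pos (r*s)).le (hg0 r))]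
  have key := hasDerivAt_integral_of_dominated_loc_of_deriv_le
    (μ := volume.restrict (Set.Ici (0:ℝ)))
    (F := fun (x : ℂ) (r : ℝ) => Complex.exp (r * x) * (g r : ℂ))
    (F' := fun (x : ℂ) (r : ℝ) => (r : ℂ) * Complex.exp (r * x) * (g r : ℂ))
    (bound := fun r => C * (Real.exp (r * (s/4)) * g r))
    (Metric.ball_mem_nhds z hε) (Eventually.of_forall hmeas) hintC
    ((Complex.measurable_ofReal.mul
      ((Complex.measurable_ofReal.mul_const z).cexp)).mul
      (Complex.measurable_ofReal.comp hgm)).aestronglyMeasurable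
    ?_ (((hint (s/4) (by linarith))).const_mul C) ?_
  · exact key.2
  · filter_upwards [ae_restrict_mem measurableSet_Ici] with r hr x hx
    have hr' : (0:ℝ) ≤ r := hr
    have hx2 : x.re ≤ s / 2 := by
      rw [Metric.mem_ball] at hx
      have := (Complex.abs_re_le_norm (x - z)).trans_lt (dist_eq_norm x z ▸ hx)
      rw [Complex.sub_re] at this
      have := abs_sub_lt_iff.mp this
      linarith [this.1]
    rw [norm_mul, norm_mul, Complex.norm_real, Complex.norm_real,
      Real.norm_eq_abs, Real.norm_eq_abs, abs_of_nonneg hr', abs_of_nonneg (hg0 r),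
      Complex.norm_exp]
    have hre : ((r : ℂ) * x).re = r * x.re := by simp [Complex.mul_re]
    rw [hre]
    have hEx : Real.exp (r * x.re) ≤ Real.exp (r * (s/2)) :=
      Real.exp_le_exp.mpr (mul_le_mul_of_nonneg_left hx2 hr')
    have hee : Real.exp (r * (s/2)) = Real.exp (r * (s/4)) * Real.exp (r * (s/4)) := by
      rw [← Real.exp_add]; ring_nf
    have hCr := hC r hr'
    rw [pow_one] at hCr
    have hE4 : 0 < Real.exp (r * (s/4)) := Real.exp_pos _
    calc r * Real.exp (r * x.re) * g r
        ≤ r * Real.exp (r * (s/2)) * g r :=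
          mul_le_mul_of_nonneg_right
            (mul_le_mul_of_nonneg_left hEx hr') (hg0 r)
      _ = (r * Real.exp (r * (s/4))) * (Real.exp (r * (s/4)) * g r) := by
          rw [hee]; ring
      _ ≤ C * (Real.exp (r * (s/4)) * g r) :=
          mul_le_mul_of_nonneg_right hCr (mul_nonneg hE4.le (hg0 r))
  · refine Eventually.of_forall (fun r x _ => ?_)
    have h1 : HasDerivAt (fun x : ℂ => Complex.exp (r * x)) (Complex.exp (r * x) * r) x := by
      simpa using ((hasDerivAt_id x).const_mul (r:ℂ)).cexp
    have h2 := h1.mul_const ((g r : ℂ))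
    exact h2.congr_deriv (by ring)

lemma lapT_contDiffOn (g : ℝ → ℝ) (hg0 : ∀ r, 0 ≤ g r) (hgm : Measurable g)
    (hint : ∀ s < (0:ℝ), IntegrableOn (fun r => Real.exp (r * s) * g r) (Set.Ici 0)) :
    ContDiffOn ℝ (⊤ : ℕ∞) (lapT g 0) (Set.Iio 0) := by
  have hopen : IsOpen {z : ℂ | z.re < 0} := isOpen_lt Complex.continuous_re continuous_const
  have hdiff : DifferentiableOn ℂ (lapC g) {z : ℂ | z.re < 0} := fun z hz =>
    (lapC_hasDeriv g hg0 hgm hint hz).differentiableAt.differentiableWithinAt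
  have hA : AnalyticOnNhd ℂ (lapC g) {z : ℂ | z.re < 0} := hdiff.analyticOnNhd hopen
  have hAR : AnalyticOnNhd ℝ (lapC g) {z : ℂ | z.re < 0} := hA.restrictScalars
  have hof : AnalyticOnNhd ℝ (fun s : ℝ => (s : ℂ)) (Set.Iio 0) := fun x _ =>
    Complex.ofRealCLM.analyticAt x
  have hcomp : AnalyticOnNhd ℝ (fun s : ℝ => lapC g (s : ℂ)) (Set.Iio 0) :=
    hAR.comp hof (fun x hx => by simpa using hx)
  have hre : AnalyticOnNhd ℝ (fun s : ℝ => (lapC g (s : ℂ)).re) (Set.Iio 0) := fun x hx =>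
    (Complex.reCLM.analyticAt _).comp (hcomp x hx)
  have heq : Set.EqOn (lapT g 0) (fun s : ℝ => (lapC g (s : ℂ)).re) (Set.Iio 0) := by
    intro x _
    show lapT g 0 x = (lapC g (x : ℂ)).re
    rw [lapC_ofReal]
    simp
  exact ((hre.analyticOn).contDiffOn isOpen_Iio.uniqueDiffOn).congr heq

lemma lapT_absMono (g : ℝ → ℝ) (hg0 : ∀ r, 0 ≤ g r) (hgm : Measurable g)
    (hint : ∀ s < (0:ℝ), IntegrableOn (fun r => Real.exp (r * s) * g r) (Set.Ici 0)) :
    ContDiffOn ℝ (⊤ : ℕ∞) (lapT g 0) (Set.Iio 0) ∧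
      ∀ (k : ℕ), ∀ x < (0:ℝ), 0 ≤ iteratedDerivWithin k (lapT g 0) (Set.Iio 0) x := by
  refine ⟨lapT_contDiffOn g hg0 hgm hint, fun k x hx => ?_⟩
  rw [lapT_iter g hg0 hgm hint k hx]
  apply setIntegral_nonneg measurableSet_Ici
  intro r hr
  have h0 := hg0 r
  have hr' : (0:ℝ) ≤ r := hr
  positivity

/-- if `w(s) = ∫₀^∞ e^{rs} f(r) dr` with `f` nonnegative,
nondecreasing and vanishing on `(−∞,0)`, then for every `u ≥ 0` the function
`s ↦ (1 − e^{us}) w(s)` is absolutely monotone on `(−∞,0)`, and equals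
`∫₀^∞ e^{rs} g(r) dr` where `g(r) = f(r) − f(r−u) ≥ 0`. -/
theorem absMono_one_sub_exp_mul (f : ℝ → ℝ) (hf0 : ∀ r, 0 ≤ f r)
    (hfmono : Monotone f) (hfneg : ∀ r < (0:ℝ), f r = 0)
    (w : ℝ → ℝ)
    (hw : ∀ s < (0:ℝ), w s = ∫ r in Set.Ici (0:ℝ), Real.exp (r * s) * f r)
    (hwint : ∀ s < (0:ℝ),
      IntegrableOn (fun r => Real.exp (r * s) * f r) (Set.Ici (0:ℝ)))
    (u : ℝ) (hu : 0 ≤ u) :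
    AbsMono1 (fun s => (1 - Real.exp (u * s)) * w s) ∧
    ∀ s < (0:ℝ), (1 - Real.exp (u * s)) * w s =
      ∫ r in Set.Ici (0:ℝ), Real.exp (r * s) * (f r - f (r - u)) := by
  set g : ℝ → ℝ := fun r => f r - f (r - u) with hgdef
  have hg0 : ∀ r, 0 ≤ g r := fun r => sub_nonneg.mpr (hfmono (by linarith : r - u ≤ r))
  have hfm2 : Measurable fun r : ℝ => f (r - u) :=
    hfmono.measurable.comp (measurable_id.sub measurable_const)
  have hgm : Measurable g := hfmono.measurable.sub hfm2
  have hI2 : ∀ s < (0:ℝ), IntegrableOn (fun r => Real.exp (r * s) * f (r - u))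
      (Set.Ici 0) := by
    intro s hs
    apply Integrable.mono (hwint s hs)
    · exact ((measurable_id.mul_const s).exp.mul hfm2).aestronglyMeasurable
    · filter_upwards with r
      rw [Real.norm_eq_abs, Real.norm_eq_abs,
        abs_of_nonneg (mul_nonneg (Real.exp_pos _).le (hf0 _)),
        abs_of_nonneg (mul_nonneg (Real.exp_pos _).le (hf0 _))]
      exact mul_le_mul_of_nonneg_left (hfmono (by linarith)) (Real.exp_pos _).le
  have hintg : ∀ s < (0:ℝ), IntegrableOn (fun r => Real.exp (r * s) * g r) (Set.Ici 0) := by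
    intro s hs
    have h := (hwint s hs).sub (hI2 s hs)
    have heq : (fun r => Real.exp (r * s) * g r) =
        fun r => Real.exp (r * s) * f r - Real.exp (r * s) * f (r - u) := by
      funext r; rw [hgdef]; ring
    rw [heq]
    exact h
  have hpart2 : ∀ s < (0:ℝ), (1 - Real.exp (u * s)) * w s =
      ∫ r in Set.Ici (0:ℝ), Real.exp (r * s) * g r := by
    intro s hs
    have htrans : Real.exp (u * s) * w s =
        ∫ r in Set.Ici (0:ℝ), Real.exp (r * s) * f (r - u) := by
      have h3 : ∀ r : ℝ, Set.indicator (Set.Ici (0:ℝ))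
          (fun r => Real.exp ((r + u) * s) * f r) (r - u) =
          Set.indicator (Set.Ici (0:ℝ)) (fun r => Real.exp (r * s) * f (r - u)) r := by
        intro r
        by_cases h1 : (0:ℝ) ≤ r - u
        · rw [Set.indicator_of_mem (Set.mem_Ici.mpr h1),
            Set.indicator_of_mem (Set.mem_Ici.mpr (by linarith : (0:ℝ) ≤ r)),
            sub_add_cancel]
        · rw [Set.indicator_of_notMem (by simpa using h1)]
          by_cases h2 : (0:ℝ) ≤ r
          · rw [Set.indicator_of_mem (Set.mem_Ici.mpr h2),
              hfneg (r - u) (by linarith), mul_zero]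
          · rw [Set.indicator_of_notMem (by simpa using h2)]
      calc Real.exp (u * s) * w s
          = ∫ r in Set.Ici (0:ℝ), Real.exp (u * s) * (Real.exp (r * s) * f r) := by
            rw [hw s hs]; exact (integral_const_mul _ _).symm
        _ = ∫ r in Set.Ici (0:ℝ), Real.exp ((r + u) * s) * f r := by
            apply integral_congr_ae; filter_upwards with r
            rw [show (r + u) * s = u * s + r * s by ring, Real.exp_add, mul_assoc]
        _ = ∫ r, Set.indicator (Set.Ici (0:ℝ))
              (fun r => Real.exp ((r + u) * s) * f r) r :=
            (integral_indicator measurableSet_Ici).symm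
        _ = ∫ r, Set.indicator (Set.Ici (0:ℝ))
              (fun r => Real.exp ((r + u) * s) * f r) (r - u) :=
            (integral_sub_right_eq_self _ u).symm
        _ = ∫ r, Set.indicator (Set.Ici (0:ℝ))
              (fun r => Real.exp (r * s) * f (r - u)) r := by
            apply integral_congr_ae; filter_upwards with r; exact h3 r
        _ = ∫ r in Set.Ici (0:ℝ), Real.exp (r * s) * f (r - u) :=
            integral_indicator measurableSet_Ici
    have hsub := integral_sub (hwint s hs) (hI2 s hs)
    have hstep : (1 - Real.exp (u * s)) * w s = w s - Real.exp (u * s) * w s := by ring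
    rw [hstep, htrans, hw s hs, ← hsub]
    apply integral_congr_ae; filter_upwards with r
    rw [hgdef]; ring
  obtain ⟨hcd, hnn⟩ := lapT_absMono g hg0 hgm hintg
  have heq : Set.EqOn (fun s => (1 - Real.exp (u * s)) * w s) (lapT g 0) (Set.Iio 0) := by
    intro s hs
    show (1 - Real.exp (u * s)) * w s = lapT g 0 s
    rw [hpart2 s hs]
    unfold lapT
    apply integral_congr_ae; filter_upwards with r
    rw [pow_zero, one_mul]
  refine ⟨⟨hcd.congr heq, fun k x hx => ?_⟩, hpart2⟩
  rw [iteratedDerivWithin_congr heq hx]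
  exact hnn k x hx
end
end

section
/- Define Li₁(s) = −log(1−s) for s < 0 and, recursively for integer p ≥ 2, Li_p(s) = ∫_s^0 Li_{p−1}(t)·(−1/t) dt (the polylogarithm of order p, which for |s| < 1 equals Σ_{n=1}^∞ sⁿ/n^p). Then for every natural number p ≥ 1, the function Li_p belongs to the class T_1. -/
open MeasureTheory Filter Set

open Topology
open scoped Nat

noncomputable section

/-- Complex derivative towers for the polylog averages: `Tc p k` is the `k`-th derivative
of the `p`-fold averaged function, on the half-plane `re z < 1`. -/
noncomputable def Tc : ℕ → ℕ → ℂ → ℂ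
  | 0 => fun k z => (k ! : ℂ) * ((1 - z) ^ (k + 1))⁻¹
  | (p+1) => fun k z => ∫ u in (0:ℝ)..1, (u : ℂ) ^ k * Tc p k (z * u)

lemma max_re_lt {z : ℂ} (hz : z.re < 1) : max z.re 0 < 1 := by
  simp [max_lt_iff, hz]

lemma one_sub_max_pos {z : ℂ} (hz : z.re < 1) : 0 < 1 - max z.re 0 := by
  linarith [max_re_lt hz]

lemma mul_re_mem {z : ℂ} (hz : z.re < 1) {u : ℝ} (hu0 : 0 ≤ u) (hu1 : u ≤ 1) :
    (z * u).re ≤ max z.re 0 := by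
  have : (z * u).re = z.re * u := by simp [Complex.mul_re]
  rw [this]
  rcases le_or_gt z.re 0 with h | h
  · have : z.re * u ≤ 0 := mul_nonpos_of_nonpos_of_nonneg h hu0
    exact this.trans (le_max_right _ _)
  · calc z.re * u ≤ z.re * 1 := by nlinarith
    _ = z.re := by ring
    _ ≤ _ := le_max_left _ _

lemma mul_re_lt {z : ℂ} (hz : z.re < 1) {u : ℝ} (hu0 : 0 ≤ u) (hu1 : u ≤ 1) :
    (z * u).re < 1 := lt_of_le_of_lt (mul_re_mem hz hu0 hu1) (max_re_lt hz)

lemma Tc_bound : ∀ p k (z : ℂ), z.re < 1 →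
    ‖Tc p k z‖ ≤ k ! / (1 - max z.re 0) ^ (k + 1) := by
  intro p
  induction p with
  | zero =>
    intro k z hz
    have h1 : (0:ℝ) < 1 - max z.re 0 := one_sub_max_pos hz
    have h2 : (1 - max z.re 0 : ℝ) ≤ ‖1 - z‖ := by
      calc (1 - max z.re 0 : ℝ) ≤ 1 - z.re := by have := le_max_left z.re 0; linarith
      _ = (1 - z).re := by simp
      _ ≤ ‖1 - z‖ := Complex.re_le_norm _
    have h3 : ‖Tc 0 k z‖ = k ! / ‖1 - z‖ ^ (k + 1) := by
      simp [Tc, norm_mul, norm_inv, norm_pow, div_eq_mul_inv]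
    rw [h3]
    apply div_le_div_of_nonneg_left (by positivity) (by positivity)
    exact pow_le_pow_left₀ h1.le h2 _
  | succ p ih =>
    intro k z hz
    have h1 : (0:ℝ) < 1 - max z.re 0 := one_sub_max_pos hz
    have key : ∀ u ∈ Set.uIoc (0:ℝ) 1, ‖(u : ℂ) ^ k * Tc p k (z * u)‖ ≤ k ! / (1 - max z.re 0) ^ (k + 1) := by
      intro u hu
      rw [Set.uIoc_of_le (by norm_num : (0:ℝ) ≤ 1)] at hu
      have hu0 : 0 < u := hu.1
      have hu1 : u ≤ 1 := hu.2
      have hzu : (z * u).re < 1 := mul_re_lt hz hu0.le hu1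
      have hb := ih k (z * u) hzu
      have hmax : max (z * u).re 0 ≤ max z.re 0 := by
        apply max_le ((mul_re_mem hz hu0.le hu1)) (le_max_right _ _)
      have h2 : (1 - max z.re 0 : ℝ) ≤ 1 - max (z*u).re 0 := by linarith
      have h4 : (k ! : ℝ) / (1 - max (z*u).re 0) ^ (k+1) ≤ k ! / (1 - max z.re 0) ^ (k+1) := by
        apply div_le_div_of_nonneg_left (by positivity) (by positivity)
        exact pow_le_pow_left₀ h1.le h2 _
      calc ‖(u : ℂ) ^ k * Tc p k (z * u)‖ = u ^ k * ‖Tc p k (z * u)‖ := by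
            rw [norm_mul, norm_pow, Complex.norm_real, Real.norm_of_nonneg hu0.le]
      _ ≤ 1 * (k ! / (1 - max (z*u).re 0) ^ (k+1)) := by
            apply mul_le_mul (pow_le_one₀ hu0.le hu1) hb (norm_nonneg _) zero_le_one
      _ ≤ k ! / (1 - max z.re 0) ^ (k+1) := by rw [one_mul]; exact h4
    have := intervalIntegral.norm_integral_le_of_norm_le_const key
    simpa [Tc] using this

lemma one_sub_ne_zero {z : ℂ} (hz : z.re < 1) : (1 : ℂ) - z ≠ 0 := by
  intro h
  have : (1 - z).re = 0 := by rw [h]; simp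
  simp at this
  linarith

lemma Tc_hasDerivAt : ∀ p k (z : ℂ), z.re < 1 → HasDerivAt (Tc p k) (Tc p (k + 1) z) z := by
  intro p
  induction p with
  | zero =>
    intro k z hz
    have h1 : (1 : ℂ) - z ≠ 0 := one_sub_ne_zero hz
    have h0 : HasDerivAt (fun z : ℂ => 1 - z) (-1) z := (hasDerivAt_id z).const_sub 1
    have hp : HasDerivAt (fun z : ℂ => (1 - z) ^ (k + 1))
        ((k + 1 : ℕ) * (1 - z) ^ k * (-1)) z := by
      simpa using h0.fun_pow (k + 1)
    have hinv := (hp.inv (pow_ne_zero _ h1)).const_mul (k ! : ℂ)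
    have : HasDerivAt (Tc 0 k)
        ((k ! : ℂ) * (-((k + 1 : ℕ) * (1 - z) ^ k * (-1)) / ((1 - z) ^ (k + 1)) ^ 2)) z := by
      simpa [Tc] using hinv
    convert this using 1
    show ((k + 1)! : ℂ) * ((1 - z) ^ (k + 2))⁻¹ = _
    rw [Nat.factorial_succ]
    push_cast
    field_simp
    ring
  | succ p ih =>
    intro k z₀ hz₀
    set ε : ℝ := (1 - z₀.re) / 2 with hε
    have hεpos : 0 < ε := by simp [hε]; linarith
    set r : ℝ := z₀.re + ε with hr
    have hr1 : r < 1 := by simp [hr, hε]; linarith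
    set m : ℝ := max r 0 with hm
    have hm1 : m < 1 := by simp [hm, max_lt_iff]; exact hr1
    have hm0 : 0 ≤ m := le_max_right _ _
    set C : ℝ := (k + 1)! / (1 - m) ^ (k + 2) with hC
    have hball : ∀ z ∈ Metric.ball z₀ ε, z.re < r := by
      intro z hzb
      have h1 : |(z - z₀).re| ≤ ‖z - z₀‖ := Complex.abs_re_le_norm _
      have h2 : ‖z - z₀‖ < ε := by simpa [Metric.mem_ball, dist_eq_norm] using hzb
      have := abs_le.mp h1
      simp only [Complex.sub_re] at this
      linarith [this.2]
    have hball1 : ∀ z ∈ Metric.ball z₀ ε, z.re < 1 := fun z hzb => (hball z hzb).trans hr1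
    -- continuity of the integrand in u
    have hcont : ∀ (j : ℕ) (z : ℂ), z.re < 1 →
        ContinuousOn (fun u : ℝ => (u : ℂ) ^ j * Tc p j (z * u)) (uIcc (0:ℝ) 1) := by
      intro j z hz
      rw [uIcc_of_le (by norm_num : (0:ℝ) ≤ 1)]
      intro u hu
      have hzu : (z * u).re < 1 := mul_re_lt hz hu.1 hu.2
      have c1 : ContinuousAt (fun u : ℝ => (u : ℂ) ^ j) u :=
        (Complex.continuous_ofReal.pow j).continuousAt
      have c2 : ContinuousAt (fun u : ℝ => Tc p j (z * u)) u := by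
        have h5 : ContinuousAt (fun w : ℂ => Tc p j w) ((fun u : ℝ => z * (u : ℂ)) u) :=
          (ih j (z * u) hzu).continuousAt
        have h6 : ContinuousAt (fun u : ℝ => z * (u : ℂ)) u :=
          (continuous_const.mul Complex.continuous_ofReal).continuousAt
        exact ContinuousAt.comp (f := fun u : ℝ => z * (u : ℂ)) h5 h6
      exact (c1.mul c2).continuousWithinAt
    have key := intervalIntegral.hasDerivAt_integral_of_dominated_loc_of_deriv_le
      (F := fun z u => (u : ℂ) ^ k * Tc p k (z * u))
      (F' := fun z u => (u : ℂ) ^ (k + 1) * Tc p (k + 1) (z * u))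
      (bound := fun _ => C) (a := 0) (b := 1) (μ := volume) (x₀ := z₀) (Metric.ball_mem_nhds z₀ hεpos)
      ?meas ?int ?meas' ?bound ?bint ?diff
    · exact ((by simpa [Tc] using key.2) : HasDerivAt (Tc (p+1) k) (Tc (p+1) (k+1) z₀) z₀)
    case meas =>
      have : ∀ᶠ z in 𝓝 z₀, z.re < 1 := by
        have : IsOpen {z : ℂ | z.re < 1} := isOpen_lt Complex.continuous_re continuous_const
        exact this.eventually_mem hz₀
      filter_upwards [this] with z hz
      exact ((hcont k z hz).mono (uIoc_subset_uIcc)).aestronglyMeasurable measurableSet_uIoc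
    case int => exact (hcont k z₀ hz₀).intervalIntegrable
    case meas' =>
      exact ((hcont (k+1) z₀ hz₀).mono (uIoc_subset_uIcc)).aestronglyMeasurable measurableSet_uIoc
    case bound =>
      apply ae_of_all
      intro u hu z hzb
      rw [Set.uIoc_of_le (by norm_num : (0:ℝ) ≤ 1)] at hu
      have hz1 : z.re < 1 := hball1 z hzb
      have hzu : (z * u).re < 1 := mul_re_lt hz1 hu.1.le hu.2
      have hb := Tc_bound p (k+1) (z * u) hzu
      have hmax : max (z * u).re 0 ≤ m := by
        apply max_le _ hm0
        exact (mul_re_mem hz1 hu.1.le hu.2).trans (max_le ((hball z hzb).le.trans (le_max_left _ _)) hm0)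
      have h2 : (0:ℝ) < 1 - m := by linarith
      have h3 : (1 - m : ℝ) ≤ 1 - max (z * u).re 0 := by linarith
      have h4 : ((k+1)! : ℝ) / (1 - max (z*u).re 0) ^ (k+2) ≤ C := by
        rw [hC]
        apply div_le_div_of_nonneg_left (by positivity) (by positivity)
        exact pow_le_pow_left₀ h2.le h3 _
      calc ‖(u : ℂ) ^ (k+1) * Tc p (k+1) (z * u)‖
          = u ^ (k+1) * ‖Tc p (k+1) (z * u)‖ := by
            rw [norm_mul, norm_pow, Complex.norm_real, Real.norm_of_nonneg hu.1.le]
      _ ≤ 1 * ((k+1)! / (1 - max (z*u).re 0) ^ (k+2)) := by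
            apply mul_le_mul (pow_le_one₀ hu.1.le hu.2) hb (norm_nonneg _) zero_le_one
      _ ≤ C := by rw [one_mul]; exact h4
    case bint => exact intervalIntegrable_const
    case diff =>
      apply ae_of_all
      intro u hu z hzb
      rw [Set.uIoc_of_le (by norm_num : (0:ℝ) ≤ 1)] at hu
      have hz1 : z.re < 1 := hball1 z hzb
      have hzu : (z * u).re < 1 := mul_re_lt hz1 hu.1.le hu.2
      have hd := (ih k (z * u) hzu).comp z (hasDerivAt_mul_const (u : ℂ))
      have := hd.const_mul ((u : ℂ) ^ k)
      refine this.congr_deriv ?_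
      ring

noncomputable def Treal (p k : ℕ) (x : ℝ) : ℝ := (Tc p k x).re

lemma real_mul_lt {x : ℝ} (hx : x < 1) {u : ℝ} (hu0 : 0 ≤ u) (hu1 : u ≤ 1) : x * u < 1 := by
  rcases le_or_gt x 0 with h | h
  · nlinarith
  · nlinarith

lemma ofReal_re_lt {x : ℝ} (hx : x < 1) : (x : ℂ).re < 1 := by simpa using hx

lemma Tc_zero_real (k : ℕ) (x : ℝ) :
    Tc 0 k ↑x = (((k ! * ((1 - x) ^ (k + 1))⁻¹ : ℝ)) : ℂ) := by
  show (k ! : ℂ) * ((1 - (x:ℂ)) ^ (k + 1))⁻¹ = _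
  push_cast
  ring

lemma Treal_zero_eq' (k : ℕ) (x : ℝ) : Treal 0 k x = k ! * ((1 - x) ^ (k + 1))⁻¹ :=
  (congrArg Complex.re (Tc_zero_real k x)).trans (Complex.ofReal_re _)

lemma Tc_real : ∀ p k (x : ℝ), x < 1 → Tc p k ↑x = ((Treal p k x : ℝ) : ℂ) := by
  intro p
  induction p with
  | zero =>
    intro k x _
    rw [Tc_zero_real, Treal_zero_eq']
  | succ p ih =>
    intro k x hx
    have key : Tc (p+1) k ↑x = ((∫ u in (0:ℝ)..1, u ^ k * Treal p k (x * u) : ℝ) : ℂ) := by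
      show (∫ u in (0:ℝ)..1, (u : ℂ) ^ k * Tc p k (↑x * ↑u)) = _
      rw [show (∫ u in (0:ℝ)..1, (u : ℂ) ^ k * Tc p k (↑x * ↑u))
          = ∫ u in (0:ℝ)..1, ((u ^ k * Treal p k (x * u) : ℝ) : ℂ) from ?_]
      · exact intervalIntegral.integral_ofReal
      apply intervalIntegral.integral_congr
      intro u hu
      rw [uIcc_of_le (by norm_num : (0:ℝ) ≤ 1)] at hu
      have hxu : x * u < 1 := real_mul_lt hx hu.1 hu.2
      show (u:ℂ) ^ k * Tc p k (↑x * ↑u) = ((u ^ k * Treal p k (x * u) : ℝ) : ℂ)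
      rw [show (↑x * ↑u : ℂ) = ((x * u : ℝ) : ℂ) by push_cast; ring, ih k (x * u) hxu]
      push_cast
      ring
    have h4 : Treal (p+1) k x = ∫ u in (0:ℝ)..1, u ^ k * Treal p k (x * u) :=
      (congrArg Complex.re key).trans (Complex.ofReal_re _)
    rw [key, h4]

lemma Treal_rec (p k : ℕ) {x : ℝ} (hx : x < 1) :
    Treal (p+1) k x = ∫ u in (0:ℝ)..1, u ^ k * Treal p k (x * u) := by
  have key : Tc (p+1) k ↑x = ((∫ u in (0:ℝ)..1, u ^ k * Treal p k (x * u) : ℝ) : ℂ) := by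
    show (∫ u in (0:ℝ)..1, (u : ℂ) ^ k * Tc p k (↑x * ↑u)) = _
    rw [show (∫ u in (0:ℝ)..1, (u : ℂ) ^ k * Tc p k (↑x * ↑u))
        = ∫ u in (0:ℝ)..1, ((u ^ k * Treal p k (x * u) : ℝ) : ℂ) from ?_]
    · exact intervalIntegral.integral_ofReal
    apply intervalIntegral.integral_congr
    intro u hu
    rw [uIcc_of_le (by norm_num : (0:ℝ) ≤ 1)] at hu
    have hxu : x * u < 1 := real_mul_lt hx hu.1 hu.2
    show (u:ℂ) ^ k * Tc p k (↑x * ↑u) = ((u ^ k * Treal p k (x * u) : ℝ) : ℂ)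
    rw [show (↑x * ↑u : ℂ) = ((x * u : ℝ) : ℂ) by push_cast; ring, Tc_real p k (x * u) hxu]
    push_cast
    ring
  exact (congrArg Complex.re key).trans (Complex.ofReal_re _)



lemma Treal_nonneg : ∀ p k (x : ℝ), x < 1 → 0 ≤ Treal p k x := by
  intro p
  induction p with
  | zero =>
    intro k x hx
    rw [Treal_zero_eq']
    have : (0:ℝ) < 1 - x := by linarith
    positivity
  | succ p ih =>
    intro k x hx
    rw [Treal_rec p k hx]
    apply intervalIntegral.integral_nonneg (by norm_num)
    intro u hu
    have hxu : x * u < 1 := real_mul_lt hx hu.1 hu.2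
    have h5 := ih k (x * u) hxu
    exact mul_nonneg (pow_nonneg hu.1 _) h5

lemma Treal_hasDerivAt (p k : ℕ) {x : ℝ} (hx : x < 1) :
    HasDerivAt (Treal p k) (Treal p (k+1) x) x :=
  (Tc_hasDerivAt p k ↑x (ofReal_re_lt hx)).real_of_complex

lemma Treal_contOn (p k : ℕ) : ContinuousOn (Treal p k) (Iio 1) :=
  fun x hx => (Treal_hasDerivAt p k hx).continuousAt.continuousWithinAt

lemma Treal_iteratedDerivWithin :
    ∀ (n p k : ℕ), ∀ x ∈ Iio (0:ℝ),
      iteratedDerivWithin n (Treal p k) (Iio 0) x = Treal p (k + n) x := by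
  intro n
  induction n with
  | zero => intro p k x hx; simp
  | succ n ih =>
    intro p k x hx
    rw [iteratedDerivWithin_succ']
    have heq : EqOn (derivWithin (Treal p k) (Iio 0)) (Treal p (k+1)) (Iio 0) := by
      intro y hy
      exact (Treal_hasDerivAt p k (lt_trans hy zero_lt_one)).hasDerivWithinAt.derivWithin
        ((uniqueDiffOn_Iio 0) y hy)
    rw [iteratedDerivWithin_congr heq hx]
    rw [ih p (k+1) x hx]
    ring_nf

/-- `s·h_{p+1}(s)` is the primitive of `h_p` vanishing at `0`. -/
lemma mul_Treal_eq_integral (p : ℕ) {s : ℝ} (hs : s < 0) :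
    s * Treal (p+1) 0 s = ∫ t in (0:ℝ)..s, Treal p 0 t := by
  have h1 : Treal (p+1) 0 s = ∫ u in (0:ℝ)..1, Treal p 0 (s * u) := by
    rw [Treal_rec p 0 (hs.trans zero_lt_one)]
    apply intervalIntegral.integral_congr
    intro u _
    simp
  rw [h1, intervalIntegral.integral_comp_mul_left (fun t => Treal p 0 t) (ne_of_lt hs)]
  simp only [mul_zero, mul_one, smul_eq_mul]
  rw [← mul_assoc, mul_inv_cancel₀ (ne_of_lt hs), one_mul]

lemma uIcc_subset_Iio {x : ℝ} (hx : x < 0) : uIcc (0:ℝ) x ⊆ Iio 1 := by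
  rw [uIcc_of_ge hx.le]
  intro t ht
  exact lt_of_le_of_lt ht.2 zero_lt_one

lemma F_hasDerivAt (p : ℕ) {x : ℝ} (hx : x < 0) :
    HasDerivAt (fun s => s * Treal (p+1) 0 s) (Treal p 0 x) x := by
  have hFTC : HasDerivAt (fun s => ∫ t in (0:ℝ)..s, Treal p 0 t) (Treal p 0 x) x := by
    apply intervalIntegral.integral_hasDerivAt_right
    · exact ((Treal_contOn p 0).mono (uIcc_subset_Iio hx)).intervalIntegrable
    · exact ContinuousOn.stronglyMeasurableAtFilter isOpen_Iio (Treal_contOn p 0) x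
        (hx.trans zero_lt_one)
    · exact (Treal_contOn p 0).continuousAt (Iio_mem_nhds (hx.trans zero_lt_one))
  apply hFTC.congr_of_eventuallyEq
  filter_upwards [Iio_mem_nhds hx] with s hs
  exact mul_Treal_eq_integral p hs

lemma Treal_analyticAt (p : ℕ) {x : ℝ} (hx : x < 1) : AnalyticAt ℝ (Treal p 0) x := by
  have hopen : IsOpen {z : ℂ | z.re < 1} := isOpen_lt Complex.continuous_re continuous_const
  have hdiff : DifferentiableOn ℂ (Tc p 0) {z : ℂ | z.re < 1} := fun z hz =>
    (Tc_hasDerivAt p 0 z hz).differentiableAt.differentiableWithinAt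
  have hA : AnalyticOnNhd ℂ (Tc p 0) {z : ℂ | z.re < 1} := hdiff.analyticOnNhd hopen
  have h1 : AnalyticAt ℂ (Tc p 0) ((Complex.ofRealCLM : ℝ →L[ℝ] ℂ) x) := by
    apply hA
    simpa using hx
  have h2 : AnalyticAt ℝ (Tc p 0) ((Complex.ofRealCLM : ℝ →L[ℝ] ℂ) x) := h1.restrictScalars
  have h3 : AnalyticAt ℝ (Tc p 0 ∘ (Complex.ofRealCLM : ℝ →L[ℝ] ℂ)) x :=
    h2.comp (Complex.ofRealCLM.analyticAt x)
  have h4 : AnalyticAt ℝ ((Complex.reCLM : ℂ →L[ℝ] ℝ) ∘ (Tc p 0 ∘ (Complex.ofRealCLM : ℝ →L[ℝ] ℂ))) x :=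
    (Complex.reCLM.analyticAt _).comp h3
  exact h4

lemma F_contDiffOn (p : ℕ) : ContDiffOn ℝ (⊤ : ℕ∞) (fun s => s * Treal (p+1) 0 s) (Iio (0:ℝ)) := by
  refine ContDiffOn.of_le (n := (⊤ : WithTop ℕ∞)) ?_ le_top
  rw [contDiffOn_omega_iff_analyticOn (uniqueDiffOn_Iio 0)]
  apply AnalyticOnNhd.analyticOn
  apply AnalyticOnNhd.mul analyticOnNhd_id
  intro x hx
  exact Treal_analyticAt (p+1) (lt_trans hx zero_lt_one)

/-- Example 1: the polylogarithms, defined on `(−∞,0)` by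
`Li₁(s) = −log(1−s)` and `Li_p(s) = ∫_s^0 Li_{p−1}(t)·(−1/t) dt` for `p ≥ 2`,
belong to the class `T_1` for every `p ≥ 1`. -/
theorem polylog_memT1 (Li : ℕ → ℝ → ℝ)
    (h1 : ∀ s < (0:ℝ), Li 1 s = -Real.log (1 - s))
    (hrec : ∀ p : ℕ, 1 ≤ p → ∀ s < (0:ℝ),
      Li (p + 1) s = ∫ t in Set.Ioo s 0, Li p t * (-t⁻¹)) :
    ∀ p : ℕ, 1 ≤ p → MemT1 (Li p) := by
  have hEq : ∀ q : ℕ, EqOn (Li (q+1)) (fun s => s * Treal (q+1) 0 s) (Iio 0) := by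
    intro q
    induction q with
    | zero =>
      intro s hs
      rw [h1 s hs]
      show _ = s * Treal 1 0 s
      rw [mul_Treal_eq_integral 0 hs]
      have hint : ∀ t ∈ uIcc (0:ℝ) s, HasDerivAt (fun t => -Real.log (1 - t)) ((1 - t)⁻¹) t := by
        intro t ht
        rw [uIcc_of_ge hs.le] at ht
        have h0 : (0:ℝ) < 1 - t := by have := ht.2; linarith
        have hl := ((Real.hasDerivAt_log (ne_of_gt h0)).comp t
          ((hasDerivAt_id t).const_sub 1)).neg
        refine hl.congr_deriv ?_
        ring
      have hcont : ContinuousOn (fun t : ℝ => (1 - t)⁻¹) (uIcc (0:ℝ) s) := by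
        apply ContinuousOn.inv₀ ((continuous_const.sub continuous_id).continuousOn)
        intro t ht
        rw [uIcc_of_ge hs.le] at ht
        have h6 := ht.2; intro hc; simp only [Pi.sub_apply] at hc; rw [sub_eq_zero] at hc; simp only [id] at hc; linarith
      have := intervalIntegral.integral_eq_sub_of_hasDerivAt hint hcont.intervalIntegrable
      have heqint : (∫ t in (0:ℝ)..s, Treal 0 0 t) = ∫ t in (0:ℝ)..s, (1 - t)⁻¹ := by
        apply intervalIntegral.integral_congr
        intro t _
        rw [Treal_zero_eq']
        norm_num
      rw [heqint, this]
      simp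
    | succ q ih =>
      intro s hs
      have hq1 : 1 ≤ q + 1 := by omega
      rw [hrec (q+1) hq1 s hs]
      show _ = s * Treal (q+2) 0 s
      rw [mul_Treal_eq_integral (q+1) hs]
      have e1 : ∫ t in Set.Ioo s 0, Li (q+1) t * (-t⁻¹)
          = ∫ t in Set.Ioo s 0, -Treal (q+1) 0 t := by
        apply setIntegral_congr_fun measurableSet_Ioo
        intro t ht
        have ht0 : t < 0 := ht.2
        show Li (q+1) t * (-t⁻¹) = -Treal (q+1) 0 t
        rw [ih ht0]
        show t * Treal (q+1) 0 t * (-t⁻¹) = _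
        rw [mul_comm t (Treal (q+1) 0 t), mul_assoc, mul_neg, mul_inv_cancel₀ (ne_of_lt ht0)]
        ring
      rw [e1, integral_neg]
      rw [← MeasureTheory.integral_Ioc_eq_integral_Ioo,
        ← intervalIntegral.integral_of_le hs.le, ← intervalIntegral.integral_symm]
  intro p hp
  obtain ⟨q, rfl⟩ : ∃ q, p = q + 1 := ⟨p - 1, (Nat.succ_pred_eq_of_pos hp).symm⟩
  refine ⟨(F_contDiffOn q).congr (hEq q), ?_, ?_⟩
  · intro x hx
    rw [hEq q hx]
    exact mul_nonpos_of_nonpos_of_nonneg hx.le (Treal_nonneg (q+1) 0 x (hx.trans zero_lt_one))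
  · intro k x hx
    have hx' : x ∈ Iio (0:ℝ) := hx
    have e1 := iteratedDerivWithin_congr (hEq q) hx'
      (n := k + 1)
    rw [e1, iteratedDerivWithin_succ']
    have heq2 : EqOn (derivWithin (fun s => s * Treal (q+1) 0 s) (Iio 0)) (Treal q 0) (Iio 0) := by
      intro y hy
      exact (F_hasDerivAt q hy).hasDerivWithinAt.derivWithin ((uniqueDiffOn_Iio 0) y hy)
    rw [iteratedDerivWithin_congr heq2 hx' (n := k)]
    rw [Treal_iteratedDerivWithin k q 0 x hx']
    exact Treal_nonneg q (0+k) x (hx.trans zero_lt_one)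


end
end

section
/- For every b ≥ 1, the function ψ(s₁,s₂) = (1/(s₁−s₂))·log((b−s₂)/(b−s₁)) − 1/b for s₁ ≠ s₂, s₁, s₂ < 0 (extended by continuity at s₁ = s₂ by ψ(s₁,s₁) = 1/(b−s₁) − 1/b), belongs to the class T_2. -/
open MeasureTheory Filter Set

noncomputable section

namespace S17


/-- `g w = log(1+w)/w`, extended by `g 0 = 1`. -/
def gfun (w : ℝ) : ℝ := if w = 0 then 1 else Real.log (1 + w) / w

lemma hasSum_gfun {w : ℝ} (hw : |w| < 1) :
    HasSum (fun n : ℕ => ((-1 : ℝ) ^ n / (n + 1)) • w ^ n) (gfun w) := by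
  rcases eq_or_ne w 0 with rfl | hw0
  · have : ∀ n : ℕ, n ≠ 0 → ((-1 : ℝ) ^ n / (n + 1)) • (0:ℝ) ^ n = 0 := by
      intro n hn; simp [zero_pow hn]
    have h := hasSum_single (f := fun n : ℕ => ((-1 : ℝ) ^ n / (n + 1)) • (0:ℝ) ^ n) 0 this
    simpa [gfun] using h
  · have h := (Real.hasSum_pow_div_log_of_abs_lt_one (x := -w) (by rwa [abs_neg])).mul_right (-(w⁻¹))
    have h1 : (1 : ℝ) - -w = 1 + w := by ring
    rw [h1] at h
    have h2 : -Real.log (1 + w) * -(w⁻¹) = Real.log (1 + w) / w := by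
      field_simp
    rw [h2] at h
    have h3 : (fun n : ℕ => (-w) ^ (n + 1) / (↑n + 1) * -w⁻¹)
        = fun n : ℕ => ((-1 : ℝ) ^ n / (n + 1)) • w ^ n := by
      funext n
      have hn : ((n : ℝ) + 1) ≠ 0 := by positivity
      have hnw : (-w) ^ (n+1) = (-1:ℝ)^(n+1) * w^(n+1) := by
        rw [show -w = (-1:ℝ) * w by ring, mul_pow]
      rw [hnw, smul_eq_mul]
      field_simp
      ring
    rw [h3] at h
    simpa [gfun, hw0] using h

/-- the formal power series of `gfun`. -/
def gser : FormalMultilinearSeries ℝ ℝ ℝ :=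
  FormalMultilinearSeries.ofScalars ℝ (fun n => (-1 : ℝ) ^ n / (n + 1))

lemma one_le_radius_gser : 1 ≤ gser.radius := by
  apply FormalMultilinearSeries.le_radius_of_bound _ 1 (r := 1)
  intro n
  have h1 : ‖gser n‖ = |(-1 : ℝ) ^ n / (n + 1)| := by
    rw [gser, FormalMultilinearSeries.ofScalars_norm]; rfl
  have h2 : |(-1 : ℝ) ^ n / (n + 1)| ≤ 1 := by
    rw [abs_div, abs_pow, abs_neg, abs_one, one_pow]
    rw [div_le_one (by positivity)]
    simp [abs_of_nonneg (by positivity : (0:ℝ) ≤ (n:ℝ) + 1)]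
  simpa [h1] using h2

lemma analyticAt_gfun_zero : AnalyticAt ℝ gfun 0 := by
  have hrad : (0 : ENNReal) < gser.radius := lt_of_lt_of_le one_pos one_le_radius_gser
  have hball := gser.hasFPowerSeriesOnBall hrad
  have hsum : gfun =ᶠ[nhds (0:ℝ)] gser.sum := by
    filter_upwards [Metric.ball_mem_nhds (0:ℝ) one_pos] with w hw
    have hw1 : |w| < 1 := by simpa [Real.dist_eq] using hw
    have h1 := hasSum_gfun hw1
    have h2 : ∀ n : ℕ, gser n (fun _ => w) = ((-1 : ℝ) ^ n / (n + 1)) • w ^ n := fun n =>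
      FormalMultilinearSeries.ofScalars_apply_eq _ w n
    have : HasSum (fun n : ℕ => gser n (fun _ => w)) (gfun w) := by
      rw [show (fun n : ℕ => gser n (fun _ => w))
        = fun n : ℕ => ((-1 : ℝ) ^ n / (n + 1)) • w ^ n from funext h2]
      exact h1
    exact this.tsum_eq.symm
  exact (hball.analyticAt).congr hsum.symm

lemma analyticAt_rlog {x : ℝ} (hx : 0 < x) : AnalyticAt ℝ Real.log x := by
  have h1 : AnalyticAt ℂ Complex.log (x : ℂ) := analyticAt_clog (by left; simpa using hx)
  have h2 : AnalyticAt ℝ (fun t : ℝ => Complex.log (t : ℂ)) x :=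
    h1.restrictScalars.comp (Complex.ofRealCLM.analyticAt x)
  have h3 : AnalyticAt ℝ (fun t : ℝ => (Complex.log (t : ℂ)).re) x :=
    (Complex.reCLM.analyticAt _).comp h2
  apply h3.congr
  filter_upwards [eventually_gt_nhds hx] with t ht
  rw [← Complex.ofReal_log ht.le]
  simp

lemma analyticAt_gfun {w : ℝ} (hw : -1 < w) : AnalyticAt ℝ gfun w := by
  rcases eq_or_ne w 0 with rfl | hw0
  · exact analyticAt_gfun_zero
  · have h1 : AnalyticAt ℝ (fun v : ℝ => Real.log (1 + v) / v) w := by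
      have hlog : AnalyticAt ℝ (fun v : ℝ => Real.log (1 + v)) w :=
        (analyticAt_rlog (by linarith)).comp (analyticAt_const.add analyticAt_id)
      exact hlog.div analyticAt_id hw0
    apply h1.congr
    filter_upwards [isOpen_ne.eventually_mem (x := w) hw0] with v hv
    simp only [gfun, if_neg hv]



lemma isOpen_negOrthant (n : ℕ) : IsOpen (negOrthant n) := by
  have h : negOrthant n = ⋂ i, (fun s : Fin n → ℝ => s i) ⁻¹' Iio 0 := by
    ext s; simp [negOrthant]
  rw [h]
  exact isOpen_iInter_of_finite fun i => (continuous_apply i).isOpen_preimage _ isOpen_Iio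

lemma uD : UniqueDiffOn ℝ (negOrthant 2) := (isOpen_negOrthant 2).uniqueDiffOn

def lin (t : ℝ) (s : Fin 2 → ℝ) : ℝ := s 1 + t * (s 0 - s 1)

def cfun (p q : ℕ) (t : ℝ) : ℝ := t ^ p * (1 - t) ^ q * (Nat.factorial (p + q) : ℝ)

def itg (b : ℝ) (p q : ℕ) (t : ℝ) (s : Fin 2 → ℝ) : ℝ :=
  cfun p q t * (b - lin t s) ^ (-(p + q + 1 : ℕ) : ℤ)

def Fint (b : ℝ) (p q : ℕ) (s : Fin 2 → ℝ) : ℝ := ∫ t in (0:ℝ)..1, itg b p q t s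

lemma lin_lt {s : Fin 2 → ℝ} (hx0 : s 0 < 0) (hx1 : s 1 < 0) {t : ℝ}
    (ht0 : 0 ≤ t) (ht1 : t ≤ 1) : lin t s < 0 := by
  have hlin : lin t s = (1 - t) * s 1 + t * s 0 := by unfold lin; ring
  rcases eq_or_lt_of_le ht0 with rfl | htpos
  · simpa [hlin] using hx1
  · have h1 : (1 - t) * s 1 ≤ 0 := mul_nonpos_of_nonneg_of_nonpos (by linarith) hx1.le
    have h2 : t * s 0 < 0 := mul_neg_of_pos_of_neg htpos hx0
    linarith [hlin ▸ (add_lt_add_of_le_of_lt h1 h2)]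

lemma one_le_sub_lin {b : ℝ} (hb : 1 ≤ b) {s : Fin 2 → ℝ} (hx0 : s 0 < 0) (hx1 : s 1 < 0)
    {t : ℝ} (ht0 : 0 ≤ t) (ht1 : t ≤ 1) : 1 ≤ b - lin t s := by
  have := lin_lt hx0 hx1 ht0 ht1; linarith

lemma itg_nonneg {b : ℝ} {p q : ℕ} {t : ℝ} {s : Fin 2 → ℝ}
    (ht0 : 0 ≤ t) (ht1 : t ≤ 1) (hpos : 0 < b - lin t s) : 0 ≤ itg b p q t s := by
  unfold itg cfun
  have h1 : (0:ℝ) ≤ t ^ p := pow_nonneg ht0 p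
  have h2 : (0:ℝ) ≤ (1 - t) ^ q := pow_nonneg (by linarith) q
  have h3 : (0:ℝ) ≤ (Nat.factorial (p + q) : ℝ) := Nat.cast_nonneg _
  have h4 : (0:ℝ) ≤ (b - lin t s) ^ (-(p + q + 1 : ℕ) : ℤ) := (zpow_pos hpos _).le
  positivity

lemma zpow_le_one_of_one_le {a : ℝ} (ha : 1 ≤ a) (k : ℕ) : a ^ (-(k : ℕ) : ℤ) ≤ 1 := by
  rw [zpow_neg, zpow_natCast]
  exact inv_le_one_of_one_le₀ (one_le_pow₀ ha)

lemma cfun_abs_le {p q : ℕ} {t : ℝ} (ht0 : 0 ≤ t) (ht1 : t ≤ 1) :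
    |cfun p q t| ≤ (Nat.factorial (p + q) : ℝ) := by
  unfold cfun
  have h1 : |t ^ p| ≤ 1 := by
    rw [abs_pow]; exact pow_le_one₀ (abs_nonneg t) (by rw [abs_of_nonneg ht0]; exact ht1)
  have h2 : |(1 - t) ^ q| ≤ 1 := by
    rw [abs_pow]; exact pow_le_one₀ (abs_nonneg _) (by rw [abs_of_nonneg (by linarith)]; linarith)
  calc |t ^ p * (1 - t) ^ q * (Nat.factorial (p + q) : ℝ)|
      = |t ^ p| * |(1 - t) ^ q| * (Nat.factorial (p + q) : ℝ) := by
        rw [abs_mul, abs_mul, abs_of_nonneg (show (0:ℝ) ≤ (Nat.factorial (p + q) : ℝ) from Nat.cast_nonneg _)]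
    _ ≤ 1 * 1 * (Nat.factorial (p + q) : ℝ) := by
        have h3 : (0:ℝ) ≤ |(1 - t) ^ q| := abs_nonneg _
        have h4 : (0:ℝ) ≤ (Nat.factorial (p + q) : ℝ) := Nat.cast_nonneg _
        have h5 : |t ^ p| * |(1 - t) ^ q| ≤ 1 := mul_le_one₀ h1 h3 h2
        nlinarith [mul_le_mul_of_nonneg_right h5 h4]
    _ = (Nat.factorial (p + q) : ℝ) := by ring

lemma continuousOn_itg {b : ℝ} (hb : 1 ≤ b) (p q : ℕ) {x : Fin 2 → ℝ}
    (hx0 : x 0 < 0) (hx1 : x 1 < 0) :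
    ContinuousOn (fun t => itg b p q t x) (Icc 0 1) := by
  have hc : Continuous (fun t : ℝ => cfun p q t) := by unfold cfun; fun_prop
  have hlin : Continuous (fun t : ℝ => b - lin t x) := by unfold lin; fun_prop
  have hz : ContinuousOn (fun t : ℝ => (b - lin t x) ^ (-(p + q + 1 : ℕ) : ℤ)) (Icc 0 1) := by
    apply ContinuousOn.zpow₀ hlin.continuousOn
    intro t ht
    left
    have := one_le_sub_lin hb hx0 hx1 ht.1 ht.2
    linarith
  exact hc.continuousOn.mul hz

lemma intervalIntegrable_itg {b : ℝ} (hb : 1 ≤ b) (p q : ℕ) {x : Fin 2 → ℝ}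
    (hx0 : x 0 < 0) (hx1 : x 1 < 0) :
    IntervalIntegrable (fun t => itg b p q t x) MeasureTheory.volume 0 1 := by
  apply ContinuousOn.intervalIntegrable
  rw [uIcc_of_le zero_le_one]
  exact continuousOn_itg hb p q hx0 hx1

lemma Fint_nonneg {b : ℝ} (hb : 1 ≤ b) (p q : ℕ) {x : Fin 2 → ℝ}
    (hx0 : x 0 < 0) (hx1 : x 1 < 0) : 0 ≤ Fint b p q x := by
  apply intervalIntegral.integral_nonneg zero_le_one
  intro t ht
  exact itg_nonneg ht.1 ht.2 (by linarith [one_le_sub_lin hb hx0 hx1 ht.1 ht.2])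


def projL (i : Fin 2) : (Fin 2 → ℝ) →L[ℝ] ℝ := ContinuousLinearMap.proj i

def Lmap (t : ℝ) : (Fin 2 → ℝ) →L[ℝ] ℝ := projL 1 + t • (projL 0 - projL 1)

def dcoef (b : ℝ) (p q : ℕ) (t : ℝ) (s : Fin 2 → ℝ) : ℝ :=
  cfun p q t * ((((p + q : ℕ) : ℝ) + 1) * (b - lin t s) ^ (-(p + q + 2 : ℕ) : ℤ))

def dmap (b : ℝ) (p q : ℕ) (t : ℝ) (s : Fin 2 → ℝ) : (Fin 2 → ℝ) →L[ℝ] ℝ :=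
  dcoef b p q t s • Lmap t

lemma Lmap_apply (t : ℝ) (v : Fin 2 → ℝ) : Lmap t v = v 1 + t * (v 0 - v 1) := by
  simp [Lmap, projL]

lemma norm_projL_le (i : Fin 2) : ‖projL i‖ ≤ 1 := by
  apply ContinuousLinearMap.opNorm_le_bound _ zero_le_one
  intro v
  simpa [projL] using norm_le_pi_norm v i

lemma norm_Lmap_le {t : ℝ} (ht0 : 0 ≤ t) (ht1 : t ≤ 1) : ‖Lmap t‖ ≤ 3 := by
  unfold Lmap
  have hs : ‖t • (projL 0 - projL 1)‖ ≤ |t| * ‖projL 0 - projL 1‖ := by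
    simpa using norm_smul_le t (projL 0 - projL 1)
  have h1 := norm_projL_le 0
  have h2 := norm_projL_le 1
  have h3 : ‖projL 0 - projL 1‖ ≤ 2 := by
    calc ‖projL 0 - projL 1‖ ≤ ‖projL 0‖ + ‖projL 1‖ := norm_sub_le _ _
      _ ≤ 2 := by linarith
  have h4 : |t| ≤ 1 := by rw [abs_of_nonneg ht0]; exact ht1
  have h5 : |t| * ‖projL 0 - projL 1‖ ≤ 2 := by
    nlinarith [abs_nonneg t, norm_nonneg (projL 0 - projL 1)]
  calc ‖projL 1 + t • (projL 0 - projL 1)‖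
      ≤ ‖projL 1‖ + ‖t • (projL 0 - projL 1)‖ := norm_add_le _ _
    _ ≤ 3 := by linarith

lemma hasFDerivAt_itg {b : ℝ} (p q : ℕ) (t : ℝ) {y : Fin 2 → ℝ}
    (hne : b - lin t y ≠ 0) :
    HasFDerivAt (fun s => itg b p q t s) (dmap b p q t y) y := by
  have hlinmap : (fun s : Fin 2 → ℝ => lin t s) = ⇑(Lmap t) := by
    funext v
    rw [Lmap_apply]
    rfl
  have hlin : HasFDerivAt (fun s : Fin 2 → ℝ => lin t s) (Lmap t) y := by
    rw [hlinmap]; exact (Lmap t).hasFDerivAt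
  have hz : HasDerivAt (fun u : ℝ => (b - u) ^ (-(p + q + 1 : ℕ) : ℤ))
      ((((p + q : ℕ) : ℝ) + 1) * (b - lin t y) ^ (-(p + q + 2 : ℕ) : ℤ)) (lin t y) := by
    have h1 : HasDerivAt (fun u : ℝ => b - u) (-1) (lin t y) := (hasDerivAt_id _).const_sub b
    have h2 := hasDerivAt_zpow (-(p + q + 1 : ℕ) : ℤ) (b - lin t y) (Or.inl hne)
    have h3 := h2.comp (lin t y) h1
    refine HasDerivAt.congr_deriv h3 ?_
    have he : (-(p + q + 1 : ℕ) : ℤ) - 1 = (-(p + q + 2 : ℕ) : ℤ) := by push_cast; ring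
    rw [← he]
    push_cast
    ring
  have h4 := (hz.comp_hasFDerivAt y hlin).const_mul (cfun p q t)
  have h5 : dmap b p q t y
      = cfun p q t • ((((p + q : ℕ) : ℝ) + 1) * (b - lin t y) ^ (-(p + q + 2 : ℕ) : ℤ)) • Lmap t := by
    simp only [dmap, dcoef, smul_smul]
  rw [h5]
  exact h4

lemma continuousOn_dmap {b : ℝ} (hb : 1 ≤ b) (p q : ℕ) {x : Fin 2 → ℝ}
    (hx0 : x 0 < 0) (hx1 : x 1 < 0) :
    ContinuousOn (fun t => dmap b p q t x) (Icc 0 1) := by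
  have hc : Continuous (fun t : ℝ => cfun p q t) := by unfold cfun; fun_prop
  have hlin : Continuous (fun t : ℝ => b - lin t x) := by unfold lin; fun_prop
  have hz : ContinuousOn (fun t : ℝ => (b - lin t x) ^ (-(p + q + 2 : ℕ) : ℤ)) (Icc 0 1) := by
    apply ContinuousOn.zpow₀ hlin.continuousOn
    intro t ht
    left
    have := one_le_sub_lin hb hx0 hx1 ht.1 ht.2
    linarith
  have hdc : ContinuousOn (fun t => dcoef b p q t x) (Icc 0 1) := by
    unfold dcoef
    exact hc.continuousOn.mul (continuousOn_const.mul hz)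
  have hL : Continuous (fun t : ℝ => Lmap t) := by
    unfold Lmap
    exact continuous_const.add (continuous_id.smul continuous_const)
  exact hdc.smul hL.continuousOn

lemma intervalIntegrable_dmap {b : ℝ} (hb : 1 ≤ b) (p q : ℕ) {x : Fin 2 → ℝ}
    (hx0 : x 0 < 0) (hx1 : x 1 < 0) :
    IntervalIntegrable (fun t => dmap b p q t x) MeasureTheory.volume 0 1 := by
  apply ContinuousOn.intervalIntegrable
  rw [uIcc_of_le zero_le_one]
  exact continuousOn_dmap hb p q hx0 hx1

lemma measurable_itg (b : ℝ) (p q : ℕ) (y : Fin 2 → ℝ) :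
    Measurable (fun t => itg b p q t y) := by
  have h1 : (fun t => itg b p q t y)
      = fun t => cfun p q t * ((b - lin t y) ^ (p + q + 1))⁻¹ := by
    funext t
    rw [itg, zpow_neg, zpow_natCast]
  rw [h1]
  have hc : Measurable (fun t : ℝ => cfun p q t) := by unfold cfun; fun_prop
  have hlin : Measurable (fun t : ℝ => b - lin t y) := by unfold lin; fun_prop
  exact hc.mul ((hlin.pow_const _).inv)

lemma hasFDerivAt_Fint {b : ℝ} (hb : 1 ≤ b) (p q : ℕ) {x : Fin 2 → ℝ}
    (hx : x ∈ negOrthant 2) :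
    HasFDerivAt (Fint b p q)
      ((Fint b (p+1) q x) • projL 0 + (Fint b p (q+1) x) • projL 1) x := by
  have hx0 : x 0 < 0 := hx 0
  have hx1 : x 1 < 0 := hx 1
  set ε : ℝ := min (-(x 0)) (-(x 1)) with hεdef
  have hεpos : 0 < ε := lt_min (by linarith) (by linarith)
  have hball : ∀ y ∈ Metric.ball x ε, (y 0 < 0 ∧ y 1 < 0) := by
    intro y hy
    have h2 : ‖y - x‖ < ε := by rwa [Metric.mem_ball, dist_eq_norm] at hy
    have key : ∀ i : Fin 2, |y i - x i| < ε := by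
      intro i
      have h1 : |y i - x i| ≤ ‖y - x‖ := by
        have := norm_le_pi_norm (y - x) i
        simpa using this
      linarith
    constructor
    · have := key 0
      have hε0 : ε ≤ -(x 0) := min_le_left _ _
      have := abs_lt.1 (key 0)
      linarith
    · have hε1 : ε ≤ -(x 1) := min_le_right _ _
      have := abs_lt.1 (key 1)
      linarith
  have hsub : ∀ y ∈ Metric.ball x ε, ∀ t ∈ Set.Ioc (0:ℝ) 1, 1 ≤ b - lin t y := by
    intro y hy t ht
    exact one_le_sub_lin hb (hball y hy).1 (hball y hy).2 ht.1.le ht.2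
  have hmain := intervalIntegral.hasFDerivAt_integral_of_dominated_of_fderiv_le
    (F := fun y t => itg b p q t y) (F' := fun y t => dmap b p q t y)
    (bound := fun _ => 3 * ((Nat.factorial (p + q) : ℝ) * (((p + q : ℕ) : ℝ) + 1)))
    (μ := MeasureTheory.volume) (a := 0) (b := 1) (x₀ := x) (Metric.ball_mem_nhds x hεpos)
    ?meas ?int ?dmeas ?bound ?bint ?diff
  case meas =>
    exact Eventually.of_forall fun y => (measurable_itg b p q y).aestronglyMeasurable
  case int => exact intervalIntegrable_itg hb p q hx0 hx1
  case dmeas =>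
    have hdc : Measurable (fun t => dcoef b p q t x) := by
      have h1 : (fun t => dcoef b p q t x)
          = fun t => cfun p q t * ((((p + q : ℕ) : ℝ) + 1) * ((b - lin t x) ^ (p + q + 2))⁻¹) := by
        funext t
        rw [dcoef, zpow_neg, zpow_natCast]
      rw [h1]
      have hc : Measurable (fun t : ℝ => cfun p q t) := by unfold cfun; fun_prop
      have hlin : Measurable (fun t : ℝ => b - lin t x) := by unfold lin; fun_prop
      exact hc.mul (measurable_const.mul ((hlin.pow_const _).inv))
    have hL : Continuous (fun t : ℝ => Lmap t) := by
      unfold Lmap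
      exact continuous_const.add (continuous_id.smul continuous_const)
    exact (hdc.aestronglyMeasurable.smul hL.aestronglyMeasurable)
  case bound =>
    apply Eventually.of_forall
    intro t ht y hy
    rw [Set.uIoc_of_le zero_le_one] at ht
    have hbl := hsub y hy t ht
    have ht0 : 0 ≤ t := ht.1.le
    have ht1 : t ≤ 1 := ht.2
    show ‖dcoef b p q t y • Lmap t‖ ≤ _
    calc ‖dcoef b p q t y • Lmap t‖ ≤ |dcoef b p q t y| * ‖Lmap t‖ := by
          simpa using norm_smul_le (dcoef b p q t y) (Lmap t)
      _ ≤ ((Nat.factorial (p + q) : ℝ) * (((p + q : ℕ) : ℝ) + 1)) * 3 := by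
          apply mul_le_mul ?ha (norm_Lmap_le ht0 ht1) (norm_nonneg _) ?hb
          case hb => positivity
          case ha =>
            simp only [dcoef]
            rw [abs_mul]
            have h1 := cfun_abs_le (p := p) (q := q) ht0 ht1
            have h2 : |(((p + q : ℕ) : ℝ) + 1) * (b - lin t y) ^ (-(p + q + 2 : ℕ) : ℤ)|
                ≤ (((p + q : ℕ) : ℝ) + 1) := by
              rw [abs_mul]
              have h3 : |(b - lin t y) ^ (-(p + q + 2 : ℕ) : ℤ)| ≤ 1 := by
                rw [abs_of_nonneg (zpow_pos (by linarith) _).le]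
                exact zpow_le_one_of_one_le hbl _
              have h4 : |(((p + q : ℕ) : ℝ) + 1)| = (((p + q : ℕ) : ℝ) + 1) := by
                rw [abs_of_nonneg (by positivity)]
              rw [h4]
              nlinarith [abs_nonneg ((b - lin t y) ^ (-(p + q + 2 : ℕ) : ℤ)), (show (0:ℝ) ≤ ((p + q : ℕ) : ℝ) + 1 by positivity)]
            have h5 : (0:ℝ) ≤ |cfun p q t| := abs_nonneg _
            nlinarith [(show (0:ℝ) ≤ (Nat.factorial (p+q) : ℝ) from Nat.cast_nonneg _), abs_nonneg ((((p + q : ℕ) : ℝ) + 1) * (b - lin t y) ^ (-(p + q + 2 : ℕ) : ℤ))]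
      _ = 3 * ((Nat.factorial (p + q) : ℝ) * (((p + q : ℕ) : ℝ) + 1)) := by ring
  case bint => exact intervalIntegrable_const
  case diff =>
    apply Eventually.of_forall
    intro t ht y hy
    rw [Set.uIoc_of_le zero_le_one] at ht
    have hbl := hsub y hy t ht
    exact hasFDerivAt_itg p q t (by linarith)
  -- now identify the derivative
  have hlast : (∫ t in (0:ℝ)..1, dmap b p q t x)
      = (Fint b (p+1) q x) • projL 0 + (Fint b p (q+1) x) • projL 1 := by
    apply ContinuousLinearMap.ext
    intro v
    rw [ContinuousLinearMap.intervalIntegral_apply (intervalIntegrable_dmap hb p q hx0 hx1) v]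
    have hptw : (fun t => (dmap b p q t x) v)
        = fun t => itg b (p+1) q t x * v 0 + itg b p (q+1) t x * v 1 := by
      funext t
      simp only [dmap, ContinuousLinearMap.smul_apply, Lmap_apply, dcoef, itg, cfun, smul_eq_mul]
      have he1 : (-(p + 1 + q + 1 : ℕ) : ℤ) = (-(p + q + 2 : ℕ) : ℤ) := by push_cast; ring
      have he2 : (-(p + (q + 1) + 1 : ℕ) : ℤ) = (-(p + q + 2 : ℕ) : ℤ) := by push_cast; ring
      rw [he1, he2]
      have hf1 : (Nat.factorial (p + 1 + q) : ℝ)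
          = (Nat.factorial (p + q) : ℝ) * (((p + q : ℕ) : ℝ) + 1) := by
        rw [show p + 1 + q = (p + q) + 1 by ring, Nat.factorial_succ]
        push_cast
        ring
      have hf2 : (Nat.factorial (p + (q + 1)) : ℝ)
          = (Nat.factorial (p + q) : ℝ) * (((p + q : ℕ) : ℝ) + 1) := by
        rw [show p + (q + 1) = (p + q) + 1 by ring, Nat.factorial_succ]
        push_cast
        ring
      rw [hf1, hf2]
      ring
    rw [hptw]
    rw [intervalIntegral.integral_add
      ((intervalIntegrable_itg hb (p+1) q hx0 hx1).mul_const _)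
      ((intervalIntegrable_itg hb p (q+1) hx0 hx1).mul_const _)]
    rw [intervalIntegral.integral_mul_const, intervalIntegral.integral_mul_const]
    simp [Fint, projL]
  rw [hlast] at hmain
  exact hmain


def Gc (b : ℝ) (p q : ℕ) : (Fin 2 → ℝ) → ((Fin 2 → ℝ) →L[ℝ] ℝ) :=
  fun y => (Fint b (p+1) q y) • projL 0 + (Fint b p (q+1) y) • projL 1

lemma fderivWithin_Fint {b : ℝ} (hb : 1 ≤ b) (p q : ℕ) {y : Fin 2 → ℝ}
    (hy : y ∈ negOrthant 2) :
    fderivWithin ℝ (Fint b p q) (negOrthant 2) y = Gc b p q y := by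
  rw [fderivWithin_of_isOpen (isOpen_negOrthant 2) hy]
  exact (hasFDerivAt_Fint hb p q hy).fderiv

lemma contDiffOn_Fint {b : ℝ} (hb : 1 ≤ b) :
    ∀ (n : ℕ) (p q : ℕ), ContDiffOn ℝ n (Fint b p q) (negOrthant 2) := by
  intro n
  induction n with
  | zero =>
    intro p q
    rw [show ((0:ℕ) : WithTop ℕ∞) = 0 from rfl, contDiffOn_zero]
    intro y hy
    exact (hasFDerivAt_Fint hb p q hy).differentiableAt.continuousAt.continuousWithinAt
  | succ n IH =>
    intro p q
    have hcast : ((n+1 : ℕ) : WithTop ℕ∞) = (n : WithTop ℕ∞) + 1 := by push_cast; rfl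
    rw [hcast, contDiffOn_succ_iff_fderivWithin uD]
    refine ⟨fun y hy => (hasFDerivAt_Fint hb p q hy).differentiableAt.differentiableWithinAt,
      ?_, ?_⟩
    · intro h
      simp at h
    · have hGc : ContDiffOn ℝ n (Gc b p q) (negOrthant 2) :=
        ((IH (p+1) q).smul contDiffOn_const).add ((IH p (q+1)).smul contDiffOn_const)
      exact hGc.congr fun y hy => fderivWithin_Fint hb p q hy

lemma contDiffOn_Gc {b : ℝ} (hb : 1 ≤ b) (n p q : ℕ) :
    ContDiffOn ℝ n (Gc b p q) (negOrthant 2) :=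
  ((contDiffOn_Fint hb n (p+1) q).smul contDiffOn_const).add
    ((contDiffOn_Fint hb n p (q+1)).smul contDiffOn_const)

lemma iter_Fint {b : ℝ} (hb : 1 ≤ b) :
    ∀ (k : ℕ) (p q : ℕ) (m : Fin k → Fin 2) (x : Fin 2 → ℝ), x ∈ negOrthant 2 →
    ∃ p' q', iteratedFDerivWithin ℝ k (Fint b p q) (negOrthant 2) x
      (fun i => Pi.single (m i) 1) = Fint b p' q' x := by
  intro k
  induction k with
  | zero =>
    intro p q m x hx
    exact ⟨p, q, by simp [iteratedFDerivWithin_zero_apply]⟩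
  | succ k IH =>
    intro p q m x hx
    have hEq : Set.EqOn (fun y => fderivWithin ℝ (Fint b p q) (negOrthant 2) y)
        (Gc b p q) (negOrthant 2) := fun y hy => fderivWithin_Fint hb p q hy
    set v := (Pi.single (m (Fin.last k)) 1 : Fin 2 → ℝ) with hv
    set L := ContinuousLinearMap.apply ℝ ℝ v with hL
    have e1 : iteratedFDerivWithin ℝ (k+1) (Fint b p q) (negOrthant 2) x
        (fun i => Pi.single (m i) 1)
        = (iteratedFDerivWithin ℝ k (Gc b p q) (negOrthant 2) x
            (Fin.init fun i => (Pi.single (m i) 1 : Fin 2 → ℝ))) v := by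
      rw [iteratedFDerivWithin_succ_apply_right uD hx,
        iteratedFDerivWithin_congr hEq hx k]
    have hcomp := L.iteratedFDerivWithin_comp_left (f := Gc b p q)
      ((contDiffOn_Gc hb k p q) x hx) uD hx (le_refl (k : WithTop ℕ∞))
    have heval : (iteratedFDerivWithin ℝ k (Gc b p q) (negOrthant 2) x
          (Fin.init fun i => (Pi.single (m i) 1 : Fin 2 → ℝ))) v
        = iteratedFDerivWithin ℝ k (⇑L ∘ Gc b p q) (negOrthant 2) x
          (Fin.init fun i => (Pi.single (m i) 1 : Fin 2 → ℝ)) := by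
      rw [hcomp]
      rfl
    have hcase : m (Fin.last k) = 0 ∨ m (Fin.last k) = 1 := by
      have h2 : ∀ j : Fin 2, j = 0 ∨ j = 1 := by decide
      exact h2 _
    have hdirs : (Fin.init fun i => (Pi.single (m i) 1 : Fin 2 → ℝ))
        = fun i : Fin k => (Pi.single (m i.castSucc) 1 : Fin 2 → ℝ) := rfl
    rcases hcase with h0 | h1
    · have hfun : ⇑L ∘ Gc b p q = Fint b (p+1) q := by
        funext y
        simp [hL, hv, h0, Gc, projL, Function.comp, Pi.single_eq_same]
      obtain ⟨p', q', hIH⟩ := IH (p+1) q (fun i => m i.castSucc) x hx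
      refine ⟨p', q', ?_⟩
      rw [e1, heval, hfun, hdirs]
      exact hIH
    · have hfun : ⇑L ∘ Gc b p q = Fint b p (q+1) := by
        funext y
        simp [hL, hv, h1, Gc, projL, Function.comp, Pi.single_eq_same]
      obtain ⟨p', q', hIH⟩ := IH p (q+1) (fun i => m i.castSucc) x hx
      refine ⟨p', q', ?_⟩
      rw [e1, heval, hfun, hdirs]
      exact hIH


lemma itg00 (b : ℝ) (x : Fin 2 → ℝ) (t : ℝ) : itg b 0 0 t x = (b - lin t x)⁻¹ := by
  unfold itg cfun
  norm_num

lemma Fint00_eq {b : ℝ} (hb : 1 ≤ b) {x : Fin 2 → ℝ} (hx : x ∈ negOrthant 2) :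
    Fint b 0 0 x = if x 0 = x 1 then 1 / (b - x 0)
      else (1 / (x 0 - x 1)) * Real.log ((b - x 1) / (b - x 0)) := by
  have hx0 : x 0 < 0 := hx 0
  have hx1 : x 1 < 0 := hx 1
  have hb0 : 0 < b - x 0 := by linarith
  have hb1 : 0 < b - x 1 := by linarith
  have hFi : Fint b 0 0 x = ∫ t in (0:ℝ)..1, (b - lin t x)⁻¹ := by
    unfold Fint
    congr 1
    funext t
    exact itg00 b x t
  by_cases h : x 0 = x 1
  · rw [if_pos h]
    have hlin : ∀ t : ℝ, lin t x = x 1 := by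
      intro t
      unfold lin
      rw [← h]
      ring
    rw [hFi]
    simp only [hlin]
    rw [intervalIntegral.integral_const]
    rw [h]
    simp [one_div]
  · rw [if_neg h]
    have hd : x 0 - x 1 ≠ 0 := sub_ne_zero.2 h
    have hderiv : ∀ t ∈ uIcc (0:ℝ) 1,
        HasDerivAt (fun u => -(x 0 - x 1)⁻¹ * Real.log (b - lin u x)) ((b - lin t x)⁻¹) t := by
      intro t ht
      rw [uIcc_of_le zero_le_one] at ht
      have hne : b - lin t x ≠ 0 := by
        have := one_le_sub_lin hb hx0 hx1 ht.1 ht.2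
        linarith
      have hlin' : HasDerivAt (fun u : ℝ => lin u x) (x 0 - x 1) t := by
        have h1 : HasDerivAt (fun u : ℝ => x 1 + u * (x 0 - x 1)) (x 0 - x 1) t := by
          simpa using ((hasDerivAt_id t).mul_const (x 0 - x 1)).const_add (x 1)
        exact h1
      have hsub : HasDerivAt (fun u : ℝ => b - lin u x) (-(x 0 - x 1)) t := hlin'.const_sub b
      have hlog := (Real.hasDerivAt_log hne).comp t hsub
      have hfin := hlog.const_mul (-(x 0 - x 1)⁻¹)
      refine HasDerivAt.congr_deriv hfin ?_
      field_simp
    have hint : IntervalIntegrable (fun t => (b - lin t x)⁻¹) MeasureTheory.volume 0 1 := by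
      have := intervalIntegrable_itg hb 0 0 hx0 hx1
      simpa only [itg00] using this
    rw [hFi, intervalIntegral.integral_eq_sub_of_hasDerivAt hderiv hint]
    have hl1 : lin 1 x = x 0 := by unfold lin; ring
    have hl0 : lin 0 x = x 1 := by unfold lin; ring
    rw [hl1, hl0]
    rw [Real.log_div (by linarith) (by linarith)]
    field_simp
    ring

lemma Fint00_le {b : ℝ} (hb : 1 ≤ b) {x : Fin 2 → ℝ} (hx : x ∈ negOrthant 2) :
    Fint b 0 0 x ≤ 1 / b := by
  have hx0 : x 0 < 0 := hx 0
  have hx1 : x 1 < 0 := hx 1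
  have hb0 : (0:ℝ) < b := by linarith
  have h1 : Fint b 0 0 x ≤ ∫ _t in (0:ℝ)..1, 1 / b := by
    unfold Fint
    apply intervalIntegral.integral_mono_on zero_le_one
      (intervalIntegrable_itg hb 0 0 hx0 hx1) intervalIntegrable_const
    intro t ht
    rw [itg00]
    have h2 : b ≤ b - lin t x := by
      have := lin_lt hx0 hx1 ht.1 ht.2
      linarith
    rw [one_div]
    exact inv_anti₀ hb0 h2
  simpa using h1


lemma phi_eq {b : ℝ} (hb : 1 ≤ b) {y : Fin 2 → ℝ} (hy0 : y 0 < 0) (hy1 : y 1 < 0) :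
    (b - y 0)⁻¹ * gfun ((y 0 - y 1) / (b - y 0)) - 1 / b
      = if y 0 = y 1 then 1 / (b - y 0) - 1 / b
        else (1 / (y 0 - y 1)) * Real.log ((b - y 1) / (b - y 0)) - 1 / b := by
  have hb0 : (0:ℝ) < b - y 0 := by linarith
  have hb1 : (0:ℝ) < b - y 1 := by linarith
  by_cases h : y 0 = y 1
  · rw [if_pos h]
    have hw0 : (y 0 - y 1) / (b - y 0) = 0 := by rw [sub_eq_zero.2 h, zero_div]
    rw [hw0]
    simp [gfun, one_div]
  · rw [if_neg h]
    have hd : y 0 - y 1 ≠ 0 := sub_ne_zero.2 h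
    have hwne : (y 0 - y 1) / (b - y 0) ≠ 0 := div_ne_zero hd (ne_of_gt hb0)
    rw [gfun, if_neg hwne]
    have h1plus : 1 + (y 0 - y 1) / (b - y 0) = (b - y 1) / (b - y 0) := by
      field_simp
      ring
    rw [h1plus]
    congr 1
    field_simp

end S17

/-- Example 2: for every `b ≥ 1` the function
`ψ(s₁,s₂) = (1/(s₁−s₂))·log((b−s₂)/(b−s₁)) − 1/b` (extended by continuity on
the diagonal by `ψ(s₁,s₁) = 1/(b−s₁) − 1/b`) belongs to the class `T_2`. -/
theorem log_divided_difference_memT2 (b : ℝ) (hb : 1 ≤ b) :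
    MemT 2 (fun s => if s 0 = s 1 then 1 / (b - s 0) - 1 / b
      else (1 / (s 0 - s 1)) * Real.log ((b - s 1) / (b - s 0)) - 1 / b) := by
  set ψ : (Fin 2 → ℝ) → ℝ := fun s => if s 0 = s 1 then 1 / (b - s 0) - 1 / b
      else (1 / (s 0 - s 1)) * Real.log ((b - s 1) / (b - s 0)) - 1 / b with hψdef
  have hpsiF : Set.EqOn ψ (fun s => S17.Fint b 0 0 s - 1 / b) (negOrthant 2) := by
    intro x hx
    simp only [hψdef]
    rw [S17.Fint00_eq hb hx]
    split_ifs with h <;> rfl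
  refine ⟨?_, ?_, ?_⟩
  · -- smoothness, via analyticity
    have hAn : AnalyticOnNhd ℝ ψ (negOrthant 2) := by
      intro x hx
      have hx0 : x 0 < 0 := hx 0
      have hx1 : x 1 < 0 := hx 1
      have hb0 : (0:ℝ) < b - x 0 := by linarith
      have hp0 : AnalyticAt ℝ (fun s : Fin 2 → ℝ => s 0) x := (S17.projL 0).analyticAt x
      have hp1 : AnalyticAt ℝ (fun s : Fin 2 → ℝ => s 1) x := (S17.projL 1).analyticAt x
      have ha1 : AnalyticAt ℝ (fun s : Fin 2 → ℝ => b - s 0) x := analyticAt_const.sub hp0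
      have hinv : AnalyticAt ℝ (fun s : Fin 2 → ℝ => (b - s 0)⁻¹) x := ha1.inv (ne_of_gt hb0)
      have hw : AnalyticAt ℝ (fun s : Fin 2 → ℝ => (s 0 - s 1) / (b - s 0)) x :=
        (hp0.sub hp1).div ha1 (ne_of_gt hb0)
      have hgw : -1 < (x 0 - x 1) / (b - x 0) := by
        rw [lt_div_iff₀ hb0]
        linarith
      have hcomp : AnalyticAt ℝ (fun s : Fin 2 → ℝ => S17.gfun ((s 0 - s 1) / (b - s 0))) x :=
        AnalyticAt.comp (g := S17.gfun)
          (f := fun s : Fin 2 → ℝ => (s 0 - s 1) / (b - s 0)) (S17.analyticAt_gfun hgw) hw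
      have hφ : AnalyticAt ℝ
          (fun s : Fin 2 → ℝ => (b - s 0)⁻¹ * S17.gfun ((s 0 - s 1) / (b - s 0)) - 1 / b) x :=
        (hinv.mul hcomp).sub analyticAt_const
      apply hφ.congr
      have hev : ∀ᶠ y in nhds x, y ∈ negOrthant 2 := (S17.isOpen_negOrthant 2).mem_nhds hx
      filter_upwards [hev] with y hy
      exact S17.phi_eq hb (hy 0) (hy 1)
    exact hAn.contDiffOn S17.uD
  · -- nonpositivity
    intro x hx
    rw [hpsiF hx]
    have h1 := S17.Fint00_le hb hx
    simp only
    linarith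
  · -- nonnegativity of derivatives
    intro k m x hx
    rw [iteratedFDerivWithin_succ_apply_right S17.uD hx]
    have hEqd : Set.EqOn (fun y => fderivWithin ℝ ψ (negOrthant 2) y)
        (S17.Gc b 0 0) (negOrthant 2) := by
      intro y hy
      have h1 : fderivWithin ℝ ψ (negOrthant 2) y
          = fderivWithin ℝ (fun s => S17.Fint b 0 0 s - 1 / b) (negOrthant 2) y :=
        fderivWithin_congr hpsiF (hpsiF hy)
      simp only
      rw [h1, fderivWithin_sub_const (1 / b)]
      exact S17.fderivWithin_Fint hb 0 0 hy
    rw [iteratedFDerivWithin_congr hEqd hx k]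
    set v := (Pi.single (m (Fin.last k)) 1 : Fin 2 → ℝ) with hv
    set L := ContinuousLinearMap.apply ℝ ℝ v with hL
    have hcomp := L.iteratedFDerivWithin_comp_left (f := S17.Gc b 0 0)
      ((S17.contDiffOn_Gc hb k 0 0) x hx) S17.uD hx (le_refl (k : WithTop ℕ∞))
    have heval : (iteratedFDerivWithin ℝ k (S17.Gc b 0 0) (negOrthant 2) x
          (Fin.init fun i => (Pi.single (m i) 1 : Fin 2 → ℝ))) v
        = iteratedFDerivWithin ℝ k (⇑L ∘ S17.Gc b 0 0) (negOrthant 2) x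
          (Fin.init fun i => (Pi.single (m i) 1 : Fin 2 → ℝ)) := by
      rw [hcomp]
      rfl
    rw [heval]
    have hdirs : (Fin.init fun i => (Pi.single (m i) 1 : Fin 2 → ℝ))
        = fun i : Fin k => (Pi.single (m i.castSucc) 1 : Fin 2 → ℝ) := rfl
    have hcase : m (Fin.last k) = 0 ∨ m (Fin.last k) = 1 := by
      have h2 : ∀ j : Fin 2, j = 0 ∨ j = 1 := by decide
      exact h2 _
    rcases hcase with h0 | h1
    · have hfun : ⇑L ∘ S17.Gc b 0 0 = S17.Fint b 1 0 := by
        funext y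
        simp [hL, hv, h0, S17.Gc, S17.projL, Function.comp, Pi.single_eq_same]
      rw [hfun, hdirs]
      obtain ⟨p', q', hIH⟩ := S17.iter_Fint hb k 1 0 (fun i => m i.castSucc) x hx
      rw [hIH]
      exact S17.Fint_nonneg hb p' q' (hx 0) (hx 1)
    · have hfun : ⇑L ∘ S17.Gc b 0 0 = S17.Fint b 0 1 := by
        funext y
        simp [hL, hv, h1, S17.Gc, S17.projL, Function.comp, Pi.single_eq_same]
      rw [hfun, hdirs]
      obtain ⟨p', q', hIH⟩ := S17.iter_Fint hb k 0 1 (fun i => m i.castSucc) x hx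
      rw [hIH]
      exact S17.Fint_nonneg hb p' q' (hx 0) (hx 1)
end
end
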